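/- arXiv:1507.00431 — 9 statements merged into one kernel-verified Lean document; each statement's English description precedes it below -/
import Mathlib

section
/- (Proposition: properties of the reduced susceptance matrix) Let B be the susceptance matrix of a connected weighted graph, partitioned into load and inverter blocks, and let K_I be a diagonal matrix with strictly negative diagonal entries. Then −B_red = −(B_LL − B_LI(B_II+K_I)^{−1}B_IL) is a symmetric M-matrix: it is positive definite and all its off-diagonal entries are nonpositive (equivalently, B_red is negative definite with nonnegative off-diagonal entries). -/
open Matrix

def suscGraph {V : Type*} (B : Matrix V V ℝ) : SimpleGraph V where
  Adj i j := i ≠ j ∧ 0 < B i j ∧ 0 < B j i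
  symm := ⟨fun _ _ h => ⟨h.1.symm, h.2.2, h.2.1⟩⟩
  loopless := ⟨fun _ h => h.1 rfl⟩

def IsSusceptance {V : Type*} [Fintype V] [DecidableEq V] (B : Matrix V V ℝ) : Prop :=
  B.IsSymm ∧ (∀ i j, i ≠ j → 0 ≤ B i j) ∧
    (∀ i, B i i = -∑ j ∈ Finset.univ.erase i, B i j) ∧ (suscGraph B).Connected

/-!
Grounding the inverter buses through `-K_I > 0` turns `-B` into the positive definite matrix
`A = -B + diag(0, -K_I)`: its quadratic form is `½ ∑ B_ij (x_i - x_j)² + ∑ (-K_a) x_a²`, and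
vanishing forces `x` to be constant on the connected graph and zero at an inverter.
`-B_red` is the Schur complement in `A` of the inverter block `D = -(B_II + K_I)`, hence positive
definite. `D` has nonpositive off-diagonal entries and positive row sums, so by the minimum
principle `D⁻¹ ≥ 0` entrywise, and the off-diagonal entries `-B_ij - (B_LI D⁻¹ B_IL)_ij` of
`-B_red` are nonpositive.
-/

namespace Matrix

theorem inv_neg {ι α : Type*} [Fintype ι] [DecidableEq ι] [CommRing α] (A : Matrix ι ι α) :
    (-A)⁻¹ = -A⁻¹ := by
  by_cases h : IsUnit A.det
  · exact inv_eq_left_inv (by rw [neg_mul_neg, nonsing_inv_mul _ h])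
  · have h' : ¬IsUnit (-A).det := by
      rwa [← isUnit_iff_isUnit_det, IsUnit.neg_iff, isUnit_iff_isUnit_det]
    rw [nonsing_inv_apply_not_isUnit _ h, nonsing_inv_apply_not_isUnit _ h', neg_zero]

theorem dotProduct_diagonal_mulVec {ι R : Type*} [Fintype ι] [DecidableEq ι] [CommSemiring R]
    (w x : ι → R) : x ⬝ᵥ diagonal w *ᵥ x = ∑ i, w i * x i ^ 2 := by
  simp only [dotProduct, mulVec_diagonal]
  exact Finset.sum_congr rfl fun i _ => by ring

section Blocks

variable {L I α : Type*}

theorem IsSymm.transpose_toBlocks₁₂ {B : Matrix (L ⊕ I) (L ⊕ I) α} (hB : B.IsSymm) :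
    B.toBlocks₁₂ᵀ = B.toBlocks₂₁ := by
  ext a i
  exact hB.apply (Sum.inr a) (Sum.inl i)

theorem IsSymm.neg_add_diagonal_inr_eq_fromBlocks [DecidableEq L] [DecidableEq I] [Ring α]
    [StarRing α] [TrivialStar α] {B : Matrix (L ⊕ I) (L ⊕ I) α} (hB : B.IsSymm) (k : I → α) :
    -B + diagonal (Sum.elim 0 (-k)) = Matrix.fromBlocks (-B.toBlocks₁₁) (-B.toBlocks₁₂)
      (-B.toBlocks₁₂)ᴴ (-(B.toBlocks₂₂ + diagonal k)) := by
  conv_lhs => rw [← fromBlocks_toBlocks B]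
  rw [← fromBlocks_diagonal, fromBlocks_neg, fromBlocks_add, conjTranspose_neg,
    conjTranspose_eq_transpose_of_trivial, hB.transpose_toBlocks₁₂]
  simp only [fromBlocks_inj, neg_add, add_zero, true_and]
  exact ⟨by simp, by rw [diagonal_neg]; rfl⟩

theorem PosDef.schur_complement₂₂ [Fintype L] [Fintype I] [DecidableEq I] [Field α]
    [PartialOrder α] [StarRing α] {A : Matrix L L α} {B : Matrix L I α} {D : Matrix I I α}
    (h : (fromBlocks A B Bᴴ D).PosDef) : (A - B * D⁻¹ * Bᴴ).PosDef := by
  have hD : D.PosDef := h.submatrix Sum.inr_injective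
  have := hD.isUnit.invertible
  refine .of_dotProduct_mulVec_pos ((IsHermitian.fromBlocks₂₂ A B hD.1).mp h.1) fun x hx => ?_
  have hxy : Sum.elim x (-((D⁻¹ * Bᴴ) *ᵥ x)) ≠ 0 := fun h0 =>
    hx (by simpa using congrArg (· ∘ Sum.inl) h0)
  simpa [dotProduct_mulVec, schur_complement_eq₂₂ A B _ _ hD.1] using
    h.dotProduct_mulVec_pos hxy

end Blocks

section ZMatrix

variable {ι K : Type*} [Fintype ι] [Field K] [LinearOrder K] [IsStrictOrderedRing K]
  {M : Matrix ι ι K}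

theorem nonneg_of_nonneg_mulVec (hoff : ∀ i j, i ≠ j → M i j ≤ 0)
    (hrow : ∀ i, 0 < ∑ j, M i j) {c : ι → K} (hc : 0 ≤ M *ᵥ c) : 0 ≤ c := by
  intro a
  by_contra! hneg : c a < 0
  obtain ⟨i, -, hmin⟩ := Finset.exists_min_image Finset.univ c ⟨a, Finset.mem_univ a⟩
  have hle : (M *ᵥ c) i ≤ (∑ j, M i j) * c i := by
    rw [mulVec, dotProduct, Finset.sum_mul]
    refine Finset.sum_le_sum fun j _ => ?_
    obtain rfl | hij := eq_or_ne i j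
    · rfl
    · exact mul_le_mul_of_nonpos_left (hmin j (Finset.mem_univ j)) (hoff i j hij)
  have := mul_neg_of_pos_of_neg (hrow i) ((hmin a (Finset.mem_univ a)).trans_lt hneg)
  have hci : 0 ≤ (M *ᵥ c) i := hc i
  linarith

theorem mulVec_injective_of_sum_row_pos (hoff : ∀ i j, i ≠ j → M i j ≤ 0)
    (hrow : ∀ i, 0 < ∑ j, M i j) : Function.Injective M.mulVec := by
  intro c d hcd
  have hcd' : M *ᵥ (c - d) = 0 := by rw [mulVec_sub, hcd, sub_self]
  have hdc : M *ᵥ (d - c) = 0 := by rw [mulVec_sub, hcd, sub_self]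
  exact le_antisymm (sub_nonneg.mp (nonneg_of_nonneg_mulVec hoff hrow hdc.ge))
    (sub_nonneg.mp (nonneg_of_nonneg_mulVec hoff hrow hcd'.ge))

theorem inv_apply_nonneg_of_sum_row_pos [DecidableEq ι] (hoff : ∀ i j, i ≠ j → M i j ≤ 0)
    (hrow : ∀ i, 0 < ∑ j, M i j) (a b : ι) : 0 ≤ M⁻¹ a b := by
  have hM : IsUnit M.det := (isUnit_iff_isUnit_det M).mp <|
    mulVec_injective_iff_isUnit.mp (mulVec_injective_of_sum_row_pos hoff hrow)
  have hcol : M *ᵥ (fun p => M⁻¹ p b) = Pi.single b 1 := by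
    funext i
    change (M * M⁻¹) i b = _
    rw [mul_nonsing_inv _ hM, one_apply, Pi.single_apply]
  exact nonneg_of_nonneg_mulVec hoff hrow (hcol ▸ Pi.single_nonneg.mpr zero_le_one) a

end ZMatrix

end Matrix

namespace IsSusceptance

section

variable {V : Type*} [Fintype V] [DecidableEq V] {B : Matrix V V ℝ}

theorem sum_row_eq_zero (hB : IsSusceptance B) (i : V) : ∑ j, B i j = 0 := by
  rw [← Finset.add_sum_erase _ _ (Finset.mem_univ i), hB.2.2.1 i, neg_add_cancel]

theorem sum_col_eq_zero (hB : IsSusceptance B) (j : V) : ∑ i, B i j = 0 := by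
  simpa only [hB.1.apply] using hB.sum_row_eq_zero j

theorem two_mul_dotProduct_neg_mulVec (hB : IsSusceptance B) (x : V → ℝ) :
    2 * (x ⬝ᵥ (-B) *ᵥ x) = ∑ i, ∑ j, B i j * (x i - x j) ^ 2 := by
  have expand : ∀ i j, B i j * (x i - x j) ^ 2 =
      x i ^ 2 * B i j + x j ^ 2 * B i j - 2 * (x i * (B i j * x j)) := fun i j => by ring
  simp only [expand, Finset.sum_add_distrib, Finset.sum_sub_distrib, ← Finset.mul_sum,
    hB.sum_row_eq_zero]
  rw [Finset.sum_comm (f := fun i j => x j ^ 2 * B i j)]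
  simp only [← Finset.mul_sum, hB.sum_col_eq_zero]
  simp [dotProduct, mulVec, Finset.mul_sum]

theorem mul_sq_sub_nonneg (hB : IsSusceptance B) (x : V → ℝ) (i j : V) :
    0 ≤ B i j * (x i - x j) ^ 2 := by
  obtain rfl | hij := eq_or_ne i j
  · simp
  · exact mul_nonneg (hB.2.1 i j hij) (sq_nonneg _)

theorem eq_of_sum_mul_sq_sub_eq_zero (hB : IsSusceptance B) {x : V → ℝ}
    (hx : ∑ i, ∑ j, B i j * (x i - x j) ^ 2 = 0) (p q : V) : x p = x q := by
  have hterm : ∀ i j, B i j * (x i - x j) ^ 2 = 0 := fun i j =>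
    (Finset.sum_eq_zero_iff_of_nonneg fun j _ => hB.mul_sq_sub_nonneg x i j).mp
      ((Finset.sum_eq_zero_iff_of_nonneg fun i _ =>
        Finset.sum_nonneg fun j _ => hB.mul_sq_sub_nonneg x i j).mp hx i (Finset.mem_univ i))
      j (Finset.mem_univ j)
  have hadj : ∀ {i j}, (suscGraph B).Adj i j → x i = x j := fun {i j} hij => by
    simpa [sub_eq_zero, hij.2.1.ne'] using hterm i j
  induction (SimpleGraph.reachable_iff_reflTransGen p q).mp (hB.2.2.2.preconnected p q) with
  | refl => rfl
  | tail _ hjk ih => exact ih.trans (hadj hjk)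

theorem posDef_neg_add_diagonal (hB : IsSusceptance B) {w : V → ℝ} (hw : 0 ≤ w) {v : V}
    (hv : 0 < w v) : (-B + diagonal w).PosDef := by
  have hsymm : (-B + diagonal w).IsHermitian :=
    (isHermitian_iff_isSymm.mpr hB.1).neg.add (isHermitian_diagonal w)
  refine .of_dotProduct_mulVec_pos hsymm fun x hx => ?_
  have hQ := hB.two_mul_dotProduct_neg_mulVec x
  have hQ₀ : 0 ≤ ∑ i, ∑ j, B i j * (x i - x j) ^ 2 :=
    Finset.sum_nonneg fun i _ => Finset.sum_nonneg fun j _ => hB.mul_sq_sub_nonneg x i j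
  have hW₀ : ∀ i ∈ Finset.univ, 0 ≤ w i * x i ^ 2 := fun i _ => mul_nonneg (hw i) (sq_nonneg _)
  have hW := Finset.sum_nonneg hW₀
  have hWv := Finset.single_le_sum hW₀ (Finset.mem_univ v)
  rw [star_trivial, add_mulVec, dotProduct_add, dotProduct_diagonal_mulVec]
  by_contra! hle
  have hconst := hB.eq_of_sum_mul_sq_sub_eq_zero (x := x) (by linarith)
  have hxv : x v = 0 := by
    have : w v * x v ^ 2 = 0 := by linarith [mul_nonneg (hw v) (sq_nonneg (x v))]
    simpa [hv.ne'] using this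
  exact hx (funext fun p => (hconst p v).trans hxv)

end

section

variable {L I : Type*} [Fintype L] [Fintype I] [DecidableEq L] [DecidableEq I]
  {B : Matrix (L ⊕ I) (L ⊕ I) ℝ}

theorem neg_toBlocks₂₂_add_diagonal_apply_nonpos (hB : IsSusceptance B) (k : I → ℝ) {a b : I}
    (hab : a ≠ b) : (-(B.toBlocks₂₂ + diagonal k)) a b ≤ 0 := by
  simpa [toBlocks₂₂, hab] using hB.2.1 (Sum.inr a) (Sum.inr b) (by simpa using hab)

theorem sum_neg_toBlocks₂₂_add_diagonal_pos (hB : IsSusceptance B) {k : I → ℝ}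
    (hk : ∀ a, k a < 0) (a : I) : 0 < ∑ b, (-(B.toBlocks₂₂ + diagonal k)) a b := by
  have hrow := hB.sum_row_eq_zero (Sum.inr a)
  rw [Fintype.sum_sum_type] at hrow
  have hL : 0 ≤ ∑ l, B (Sum.inr a) (Sum.inl l) :=
    Finset.sum_nonneg fun l _ => hB.2.1 _ _ Sum.inr_ne_inl
  simp only [toBlocks₂₂, Matrix.neg_apply, Matrix.add_apply, of_apply, diagonal_apply,
    Finset.sum_add_distrib, Finset.sum_neg_distrib, Finset.sum_ite_eq, Finset.mem_univ, if_true]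
  linarith [hk a]

end

end IsSusceptance

theorem reduced_susceptance_is_Mmatrix_general {n m : ℕ} (hm : 0 < m)
    (B : Matrix (Fin n ⊕ Fin m) (Fin n ⊕ Fin m) ℝ) (hB : IsSusceptance B)
    (k : Fin m → ℝ) (hk : ∀ i, k i < 0) :
    let Bred := B.toBlocks₁₁ -
      B.toBlocks₁₂ * (B.toBlocks₂₂ + Matrix.diagonal k)⁻¹ * B.toBlocks₂₁
    (-Bred).PosDef ∧ ∀ i j, i ≠ j → (-Bred) i j ≤ 0 := by
  intro Bred
  set D := -(B.toBlocks₂₂ + diagonal k)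
  have hschur : -Bred = -B.toBlocks₁₁ - (-B.toBlocks₁₂) * D⁻¹ * (-B.toBlocks₁₂)ᴴ := by
    rw [Matrix.inv_neg, conjTranspose_neg, conjTranspose_eq_transpose_of_trivial,
      hB.1.transpose_toBlocks₁₂]
    simp only [Bred, neg_sub, Matrix.neg_mul, Matrix.mul_neg, neg_neg]
    abel
  have hgrounded : (-B + diagonal (Sum.elim 0 (-k))).PosDef :=
    hB.posDef_neg_add_diagonal (v := Sum.inr ⟨0, hm⟩)
      (fun p => by cases p <;> simp [(hk _).le]) (neg_pos.mpr (hk _))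
  rw [hB.1.neg_add_diagonal_inr_eq_fromBlocks] at hgrounded
  refine ⟨hschur ▸ hgrounded.schur_complement₂₂, fun i j hij => ?_⟩
  have hDinv := inv_apply_nonneg_of_sum_row_pos
    (fun _ _ => hB.neg_toBlocks₂₂_add_diagonal_apply_nonpos k)
    (hB.sum_neg_toBlocks₂₂_add_diagonal_pos hk)
  have hB₁₂ : ∀ a b, 0 ≤ B.toBlocks₁₂ a b := fun _ _ => hB.2.1 _ _ Sum.inl_ne_inr
  have hprod : 0 ≤ ((-B.toBlocks₁₂) * D⁻¹ * (-B.toBlocks₁₂)ᴴ) i j := by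
    rw [conjTranspose_neg, Matrix.mul_neg, Matrix.neg_mul, Matrix.neg_mul, neg_neg]
    simp only [mul_apply, conjTranspose_apply, star_trivial]
    exact Finset.sum_nonneg fun b _ => mul_nonneg
      (Finset.sum_nonneg fun a _ => mul_nonneg (hB₁₂ i a) (hDinv a b)) (hB₁₂ j b)
  have h₁₁ : 0 ≤ B.toBlocks₁₁ i j := hB.2.1 _ _ (Sum.inl_injective.ne hij)
  rw [hschur, Matrix.sub_apply, Matrix.neg_apply]
  linarith

/-- `-B_red = -(B_LL - B_LI (B_II + K_I)⁻¹ B_IL)` is a symmetric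
M-matrix: positive definite with nonpositive off-diagonal entries (equivalently,
`B_red` is negative definite with nonnegative off-diagonal entries). -/
theorem reduced_susceptance_is_Mmatrix {n m : ℕ} (hn : 0 < n) (hm : 0 < m)
    (B : Matrix (Fin n ⊕ Fin m) (Fin n ⊕ Fin m) ℝ) (hB : IsSusceptance B)
    (k : Fin m → ℝ) (hk : ∀ i, k i < 0)
    (hinv : IsUnit (B.toBlocks₂₂ + Matrix.diagonal k).det) :
    let Bred := B.toBlocks₁₁ -
      B.toBlocks₁₂ * (B.toBlocks₂₂ + Matrix.diagonal k)⁻¹ * B.toBlocks₂₁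
    (-Bred).PosDef ∧ ∀ i j, i ≠ j → (-Bred) i j ≤ 0 :=
  reduced_susceptance_is_Mmatrix_general hm B hB k hk
end

section
/- (Proposition: averaging matrices are row-stochastic and open-circuit load voltages are positive) Let B be the susceptance matrix of a connected weighted graph, partitioned into load and inverter blocks, and let K_I be a diagonal matrix with strictly negative diagonal entries. Then the matrices W_1 := −B_red^{−1}B_LI(B_II+K_I)^{−1}K_I ∈ ℝ^{n×m} and W_2 := (B_II+K_I)^{−1}(−B_IL | K_I) ∈ ℝ^{m×(n+m)} are row-stochastic: all their entries are nonnegative and every row sums to 1. Consequently, for every vector E_I* ∈ ℝ^m with strictly positive entries, the open-circuit load voltage vector E_L* := W_1 E_I* has strictly positive entries. -/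
open Matrix

/-- A matrix is row-stochastic if its entries are nonnegative and each row sums to 1. -/
def RowStochastic {a b : Type*} [Fintype b] (W : Matrix a b ℝ) : Prop :=
  (∀ i j, 0 ≤ W i j) ∧ ∀ i, ∑ j, W i j = 1

/-!
The matrices `B_II + K_I` and `B_red` have nonnegative off-diagonal entries and nonpositive row
sums, strictly negative for `B_II + K_I` because every inverter is grounded through `K_I`.
A maximum principle then shows that the negatives of their inverses are entrywise nonnegative,
so `W₁` and `W₂` are products of entrywise nonnegative factors. Their row sums are read off from
`B 1 = 0`, which gives `(-B_IL | K_I) 1 = (B_II + K_I) 1` and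
`B_red 1 = -B_LI (B_II + K_I)⁻¹ K_I 1`. Finally, a row-stochastic matrix maps positive vectors to
positive vectors, since each of its rows has a positive entry.
-/

namespace Matrix

variable {l m n : Type*}

def EntrywiseNonneg (M : Matrix m n ℝ) : Prop := ∀ i j, 0 ≤ M i j

theorem EntrywiseNonneg.mul [Fintype n] {M : Matrix l n ℝ} {N : Matrix n m ℝ}
    (hM : M.EntrywiseNonneg) (hN : N.EntrywiseNonneg) : (M * N).EntrywiseNonneg :=
  fun i j => Finset.sum_nonneg fun r _ => mul_nonneg (hM i r) (hN r j)

theorem EntrywiseNonneg.mulVec_nonneg [Fintype n] {M : Matrix m n ℝ} (hM : M.EntrywiseNonneg)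
    {v : n → ℝ} (hv : 0 ≤ v) : 0 ≤ M *ᵥ v :=
  fun i => Finset.sum_nonneg fun j _ => mul_nonneg (hM i j) (hv j)

theorem mulVec_one_apply [Fintype n] (A : Matrix m n ℝ) (i : m) : (A *ᵥ 1) i = ∑ j, A i j := by
  simp [mulVec, dotProduct]

theorem entrywiseNonneg_neg_diagonal [DecidableEq n] {v : n → ℝ} (hv : v ≤ 0) :
    (-diagonal v).EntrywiseNonneg := fun i j => by
  by_cases h : i = j
  · simpa [h] using hv j
  · simp [h]

theorem EntrywiseNonneg.fromCols {M : Matrix m n ℝ} {N : Matrix m l ℝ} (hM : M.EntrywiseNonneg)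
    (hN : N.EntrywiseNonneg) : (fromCols M N).EntrywiseNonneg
  | i, .inl j => hM i j
  | i, .inr j => hN i j

section NegativeRowSums

variable [Fintype n] {A : Matrix n n ℝ}

/-- At a positive maximum `x i₀` of `x`, row `i₀` gives `(A x) i₀ ≤ (∑ j, A i₀ j) x i₀ < 0`. -/
theorem nonpos_of_mulVec_nonneg (hoff : ∀ i j, i ≠ j → 0 ≤ A i j) (hrow : ∀ i, ∑ j, A i j < 0)
    {x : n → ℝ} (hx : 0 ≤ A *ᵥ x) : x ≤ 0 := by
  intro i
  by_contra! hi
  obtain ⟨i₀, -, hmax⟩ := Finset.exists_max_image Finset.univ x ⟨i, Finset.mem_univ i⟩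
  have hpos : 0 < x i₀ := hi.trans_le (hmax i (Finset.mem_univ i))
  have hbound : (A *ᵥ x) i₀ ≤ (∑ j, A i₀ j) * x i₀ := by
    rw [Finset.sum_mul]
    refine Finset.sum_le_sum fun j _ => ?_
    rcases eq_or_ne i₀ j with rfl | hj
    · rfl
    · exact mul_le_mul_of_nonneg_left (hmax j (Finset.mem_univ j)) (hoff i₀ j hj)
  have hx₀ : 0 ≤ (A *ᵥ x) i₀ := hx i₀
  linarith [mul_neg_of_neg_of_pos (hrow i₀) hpos]

theorem isUnit_det_of_rowSum_neg [DecidableEq n] (hoff : ∀ i j, i ≠ j → 0 ≤ A i j)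
    (hrow : ∀ i, ∑ j, A i j < 0) : IsUnit A.det := by
  rw [isUnit_iff_ne_zero, Ne, ← exists_mulVec_eq_zero_iff]
  rintro ⟨v, hv, hAv⟩
  have hle : v ≤ 0 := nonpos_of_mulVec_nonneg hoff hrow hAv.ge
  have hge : -v ≤ 0 := nonpos_of_mulVec_nonneg hoff hrow (by rw [mulVec_neg, hAv, neg_zero])
  exact hv (le_antisymm hle (neg_nonpos.mp hge))

theorem neg_inv_nonneg_of_rowSum_neg [DecidableEq n] (hoff : ∀ i j, i ≠ j → 0 ≤ A i j)
    (hrow : ∀ i, ∑ j, A i j < 0) : (-A⁻¹).EntrywiseNonneg := by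
  intro i j
  have hcol : A *ᵥ (A⁻¹ *ᵥ Pi.single j 1) = Pi.single j 1 := by
    rw [mulVec_mulVec, mul_nonsing_inv _ (isUnit_det_of_rowSum_neg hoff hrow), one_mulVec]
  have hentry := nonpos_of_mulVec_nonneg hoff hrow (hcol ▸ Pi.single_nonneg.2 zero_le_one) i
  simpa [mulVec_single_one] using hentry

open Filter Topology in
/-- Perturb to `A - ε • 1`, which has strictly negative row sums, and let `ε → 0⁺`. -/
theorem neg_inv_nonneg_of_rowSum_nonpos [DecidableEq n] (hoff : ∀ i j, i ≠ j → 0 ≤ A i j)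
    (hrow : ∀ i, ∑ j, A i j ≤ 0) (hA : IsUnit A.det) : (-A⁻¹).EntrywiseNonneg := by
  intro i j
  have hperturbed : ∀ ε : ℝ, 0 < ε → 0 ≤ (-(A - ε • 1)⁻¹) i j := by
    intro ε hε
    refine neg_inv_nonneg_of_rowSum_neg (fun a b hab => ?_) (fun a => ?_) i j
    · simpa [one_apply_ne hab] using hoff a b hab
    · simpa [one_apply, Finset.sum_sub_distrib] using (hrow a).trans_lt (lt_add_of_pos_right _ hε)
  have hinv : ContinuousAt Inv.inv A :=
    continuousAt_matrix_inv A (by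
      simpa [Ring.inverse_eq_inv'] using continuousAt_inv₀ (isUnit_iff_ne_zero.mp hA))
  have hpath : Tendsto (fun ε : ℝ => A - ε • 1) (𝓝[>] 0) (𝓝 A) := by
    have : Continuous fun ε : ℝ => A - ε • (1 : Matrix n n ℝ) := by fun_prop
    simpa using (this.tendsto 0).mono_left nhdsWithin_le_nhds
  have hlim := tendsto_pi_nhds.1 (tendsto_pi_nhds.1 (hinv.tendsto.comp hpath).neg i) j
  exact ge_of_tendsto hlim (eventually_nhdsWithin_of_forall hperturbed)

end NegativeRowSums

end Matrix

theorem rowStochastic_iff {a b : Type*} [Fintype b] {W : Matrix a b ℝ} :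
    RowStochastic W ↔ W.EntrywiseNonneg ∧ W *ᵥ 1 = 1 := by
  simp only [RowStochastic, EntrywiseNonneg, funext_iff, mulVec_one_apply, Pi.one_apply]

theorem RowStochastic.mulVec_pos {a b : Type*} [Fintype b] {W : Matrix a b ℝ}
    (hW : RowStochastic W) {x : b → ℝ} (hx : ∀ j, 0 < x j) (i : a) : 0 < (W *ᵥ x) i := by
  obtain ⟨j, -, hj⟩ : ∃ j ∈ Finset.univ, 0 < W i j :=
    Finset.exists_lt_of_sum_lt (by simp [hW.2 i])
  exact Finset.sum_pos' (fun j _ => mul_nonneg (hW.1 i j) (hx j).le)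
    ⟨j, Finset.mem_univ j, mul_pos hj (hx j)⟩

theorem IsSusceptance.mulVec_one_eq_zero {V : Type*} [Fintype V] [DecidableEq V]
    {B : Matrix V V ℝ} (hB : IsSusceptance B) : B *ᵥ 1 = 0 := by
  ext i
  rw [mulVec_one_apply, ← Finset.add_sum_erase _ _ (Finset.mem_univ i), hB.2.2.1 i, Pi.zero_apply,
    neg_add_cancel]

section KronReduction

variable {ι κ : Type*} {B : Matrix (ι ⊕ κ) (ι ⊕ κ) ℝ} {k : κ → ℝ}

theorem toBlocks₁₂_nonneg (hoff : ∀ i j, i ≠ j → 0 ≤ B i j) : B.toBlocks₁₂.EntrywiseNonneg :=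
  fun _ _ => hoff _ _ Sum.inl_ne_inr

theorem toBlocks₂₁_nonneg (hoff : ∀ i j, i ≠ j → 0 ≤ B i j) : B.toBlocks₂₁.EntrywiseNonneg :=
  fun _ _ => hoff _ _ Sum.inr_ne_inl

theorem toBlocks₂₂_add_diagonal_offDiag_nonneg [DecidableEq κ]
    (hoff : ∀ i j, i ≠ j → 0 ≤ B i j) : ∀ i j, i ≠ j → 0 ≤ (B.toBlocks₂₂ + diagonal k) i j :=
  fun i j hij => by
    rw [Matrix.add_apply, diagonal_apply_ne _ hij, add_zero]
    exact hoff _ _ (Sum.inr_injective.ne hij)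

/-- The paper's `B_red`: the inverter nodes, each grounded through `K`, are eliminated. -/
noncomputable def kronReduction [Fintype κ] [DecidableEq κ] (B : Matrix (ι ⊕ κ) (ι ⊕ κ) ℝ)
    (k : κ → ℝ) : Matrix ι ι ℝ :=
  B.toBlocks₁₁ - B.toBlocks₁₂ * (B.toBlocks₂₂ + diagonal k)⁻¹ * B.toBlocks₂₁

variable [Fintype ι] [Fintype κ]

theorem toBlocks_mulVec_one_eq_zero (hrow : B *ᵥ 1 = 0) :
    B.toBlocks₁₁ *ᵥ 1 + B.toBlocks₁₂ *ᵥ 1 = 0 ∧ B.toBlocks₂₁ *ᵥ 1 + B.toBlocks₂₂ *ᵥ 1 = 0 := by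
  rw [← fromBlocks_toBlocks B, fromBlocks_mulVec] at hrow
  exact ⟨funext fun i => congrFun hrow (.inl i), funext fun i => congrFun hrow (.inr i)⟩

variable [DecidableEq κ]

theorem toBlocks₂₂_add_diagonal_mulVec_one (hrow : B *ᵥ 1 = 0) :
    (B.toBlocks₂₂ + diagonal k) *ᵥ 1 = k - B.toBlocks₂₁ *ᵥ 1 := by
  rw [add_mulVec, eq_neg_of_add_eq_zero_right (toBlocks_mulVec_one_eq_zero hrow).2]
  ext i
  simp only [Pi.add_apply, Pi.neg_apply, mulVec_diagonal, Pi.one_apply, mul_one, Pi.sub_apply]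
  ring

theorem toBlocks₂₂_add_diagonal_rowSum_neg (hoff : ∀ i j, i ≠ j → 0 ≤ B i j)
    (hrow : B *ᵥ 1 = 0) (hk : ∀ i, k i < 0) :
    ∀ i, ∑ j, (B.toBlocks₂₂ + diagonal k) i j < 0 := fun i => by
  have hflow : 0 ≤ (B.toBlocks₂₁ *ᵥ 1) i := (toBlocks₂₁_nonneg hoff).mulVec_nonneg zero_le_one i
  rw [← mulVec_one_apply, toBlocks₂₂_add_diagonal_mulVec_one hrow, Pi.sub_apply]
  linarith [hk i]

theorem isUnit_det_toBlocks₂₂_add_diagonal (hoff : ∀ i j, i ≠ j → 0 ≤ B i j)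
    (hrow : B *ᵥ 1 = 0) (hk : ∀ i, k i < 0) : IsUnit (B.toBlocks₂₂ + diagonal k).det :=
  isUnit_det_of_rowSum_neg (toBlocks₂₂_add_diagonal_offDiag_nonneg hoff)
    (toBlocks₂₂_add_diagonal_rowSum_neg hoff hrow hk)

theorem neg_inv_toBlocks₂₂_add_diagonal_nonneg (hoff : ∀ i j, i ≠ j → 0 ≤ B i j)
    (hrow : B *ᵥ 1 = 0) (hk : ∀ i, k i < 0) :
    (-(B.toBlocks₂₂ + diagonal k)⁻¹).EntrywiseNonneg :=
  neg_inv_nonneg_of_rowSum_neg (toBlocks₂₂_add_diagonal_offDiag_nonneg hoff)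
    (toBlocks₂₂_add_diagonal_rowSum_neg hoff hrow hk)

theorem kronReduction_mulVec_one (hoff : ∀ i j, i ≠ j → 0 ≤ B i j) (hrow : B *ᵥ 1 = 0)
    (hk : ∀ i, k i < 0) :
    kronReduction B k *ᵥ 1 = -(B.toBlocks₁₂ *ᵥ ((B.toBlocks₂₂ + diagonal k)⁻¹ *ᵥ k)) := by
  have h₁₁ := eq_neg_of_add_eq_zero_left (toBlocks_mulVec_one_eq_zero hrow).1
  have h₂₁ : B.toBlocks₂₁ *ᵥ 1 = k - (B.toBlocks₂₂ + diagonal k) *ᵥ 1 := by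
    rw [toBlocks₂₂_add_diagonal_mulVec_one hrow, sub_sub_cancel]
  rw [kronReduction, sub_mulVec, h₁₁, Matrix.mul_assoc, ← mulVec_mulVec, ← mulVec_mulVec, h₂₁,
    mulVec_sub, mulVec_mulVec, nonsing_inv_mul _ (isUnit_det_toBlocks₂₂_add_diagonal hoff hrow hk),
    one_mulVec, mulVec_sub]
  abel

theorem kronReduction_offDiag_nonneg (hoff : ∀ i j, i ≠ j → 0 ≤ B i j) (hrow : B *ᵥ 1 = 0)
    (hk : ∀ i, k i < 0) : ∀ i j, i ≠ j → 0 ≤ kronReduction B k i j := by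
  intro i j hij
  have hcorr := ((toBlocks₁₂_nonneg hoff).mul
    (neg_inv_toBlocks₂₂_add_diagonal_nonneg hoff hrow hk)).mul (toBlocks₂₁_nonneg hoff) i j
  rw [Matrix.mul_neg, Matrix.neg_mul, neg_apply] at hcorr
  have h₁₁ : 0 ≤ B.toBlocks₁₁ i j := hoff _ _ (Sum.inl_injective.ne hij)
  rw [kronReduction, Matrix.sub_apply]
  linarith

theorem kronReduction_rowSum_nonpos (hoff : ∀ i j, i ≠ j → 0 ≤ B i j) (hrow : B *ᵥ 1 = 0)
    (hk : ∀ i, k i < 0) : ∀ i, ∑ j, kronReduction B k i j ≤ 0 := fun i => by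
  have hflow := (toBlocks₁₂_nonneg hoff).mulVec_nonneg
    ((neg_inv_toBlocks₂₂_add_diagonal_nonneg hoff hrow hk).mulVec_nonneg
      (neg_nonneg.2 fun j => (hk j).le)) i
  rw [neg_mulVec_neg] at hflow
  rw [← mulVec_one_apply, kronReduction_mulVec_one hoff hrow hk, Pi.neg_apply, neg_nonpos]
  exact hflow

theorem neg_inv_kronReduction_nonneg [DecidableEq ι] (hoff : ∀ i j, i ≠ j → 0 ≤ B i j)
    (hrow : B *ᵥ 1 = 0) (hk : ∀ i, k i < 0) (hred : IsUnit (kronReduction B k).det) :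
    (-(kronReduction B k)⁻¹).EntrywiseNonneg :=
  neg_inv_nonneg_of_rowSum_nonpos (kronReduction_offDiag_nonneg hoff hrow hk)
    (kronReduction_rowSum_nonpos hoff hrow hk) hred

/-- The paper's `W₁`. -/
noncomputable def averagingMatrix₁ [DecidableEq ι] (B : Matrix (ι ⊕ κ) (ι ⊕ κ) ℝ) (k : κ → ℝ) :
    Matrix ι κ ℝ :=
  -((kronReduction B k)⁻¹ * B.toBlocks₁₂ * (B.toBlocks₂₂ + diagonal k)⁻¹ * diagonal k)

/-- The paper's `W₂`. -/
noncomputable def averagingMatrix₂ (B : Matrix (ι ⊕ κ) (ι ⊕ κ) ℝ) (k : κ → ℝ) :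
    Matrix κ (ι ⊕ κ) ℝ :=
  (B.toBlocks₂₂ + diagonal k)⁻¹ * fromCols (-B.toBlocks₂₁) (diagonal k)

theorem rowStochastic_averagingMatrix₁ [DecidableEq ι] (hoff : ∀ i j, i ≠ j → 0 ≤ B i j)
    (hrow : B *ᵥ 1 = 0) (hk : ∀ i, k i < 0) (hred : IsUnit (kronReduction B k).det) :
    RowStochastic (averagingMatrix₁ B k) := by
  refine rowStochastic_iff.2 ⟨?_, ?_⟩
  · have hprod := (((neg_inv_kronReduction_nonneg hoff hrow hk hred).mul (toBlocks₁₂_nonneg hoff)).mul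
      (neg_inv_toBlocks₂₂_add_diagonal_nonneg hoff hrow hk)).mul
      (entrywiseNonneg_neg_diagonal fun j => (hk j).le)
    simp only [Matrix.mul_neg, Matrix.neg_mul, neg_neg] at hprod
    exact hprod
  · have hdiag : diagonal k *ᵥ 1 = k := funext fun i => by simp [mulVec_diagonal]
    rw [averagingMatrix₁, neg_mulVec, ← mulVec_mulVec, hdiag, ← mulVec_mulVec, ← mulVec_mulVec,
      ← mulVec_neg, ← kronReduction_mulVec_one hoff hrow hk, mulVec_mulVec,
      nonsing_inv_mul _ hred, one_mulVec]

theorem rowStochastic_averagingMatrix₂ (hoff : ∀ i j, i ≠ j → 0 ≤ B i j) (hrow : B *ᵥ 1 = 0)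
    (hk : ∀ i, k i < 0) : RowStochastic (averagingMatrix₂ B k) := by
  refine rowStochastic_iff.2 ⟨?_, ?_⟩
  · have hcols : (-fromCols (-B.toBlocks₂₁) (diagonal k)).EntrywiseNonneg := by
      rw [fromCols_neg, neg_neg]
      exact (toBlocks₂₁_nonneg hoff).fromCols (entrywiseNonneg_neg_diagonal fun j => (hk j).le)
    have hprod := (neg_inv_toBlocks₂₂_add_diagonal_nonneg hoff hrow hk).mul hcols
    simp only [Matrix.neg_mul, Matrix.mul_neg, neg_neg] at hprod
    exact hprod
  · have hcols : fromCols (-B.toBlocks₂₁) (diagonal k) *ᵥ 1 = (B.toBlocks₂₂ + diagonal k) *ᵥ 1 := by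
      rw [fromCols_mulVec, toBlocks₂₂_add_diagonal_mulVec_one hrow]
      ext
      simp only [Pi.one_comp, neg_mulVec, Pi.add_apply, Pi.neg_apply, mulVec_diagonal,
        Pi.one_apply, mul_one, Pi.sub_apply]
      ring
    rw [averagingMatrix₂, ← mulVec_mulVec, hcols, mulVec_mulVec,
      nonsing_inv_mul _ (isUnit_det_toBlocks₂₂_add_diagonal hoff hrow hk), one_mulVec]

end KronReduction

theorem averaging_matrices_rowStochastic_general {n m : ℕ}
    (B : Matrix (Fin n ⊕ Fin m) (Fin n ⊕ Fin m) ℝ) (hB : IsSusceptance B)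
    (k : Fin m → ℝ) (hk : ∀ i, k i < 0)
    (hinv2 : IsUnit
      (B.toBlocks₁₁ -
        B.toBlocks₁₂ * (B.toBlocks₂₂ + Matrix.diagonal k)⁻¹ * B.toBlocks₂₁).det) :
    let Bred := B.toBlocks₁₁ -
      B.toBlocks₁₂ * (B.toBlocks₂₂ + Matrix.diagonal k)⁻¹ * B.toBlocks₂₁
    let W1 := -(Bred⁻¹ * B.toBlocks₁₂ * (B.toBlocks₂₂ + Matrix.diagonal k)⁻¹ *
      Matrix.diagonal k)
    let W2 := (B.toBlocks₂₂ + Matrix.diagonal k)⁻¹ *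
      Matrix.fromCols (-B.toBlocks₂₁) (Matrix.diagonal k)
    RowStochastic W1 ∧ RowStochastic W2 ∧
      ∀ EIstar : Fin m → ℝ, (∀ i, 0 < EIstar i) → ∀ i, 0 < W1.mulVec EIstar i := by
  intro Bred W1 W2
  have hW₁ : RowStochastic W1 :=
    rowStochastic_averagingMatrix₁ hB.2.1 hB.mulVec_one_eq_zero hk hinv2
  exact ⟨hW₁, rowStochastic_averagingMatrix₂ hB.2.1 hB.mulVec_one_eq_zero hk,
    fun _ hE => hW₁.mulVec_pos hE⟩

/-- the averaging matrices `W₁ = -B_red⁻¹ B_LI (B_II+K_I)⁻¹ K_I` and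
`W₂ = (B_II+K_I)⁻¹ (-B_IL | K_I)` are row-stochastic, and consequently the
open-circuit load voltage vector `E_L* = W₁ E_I*` is strictly positive whenever
`E_I*` is strictly positive. -/
theorem averaging_matrices_rowStochastic {n m : ℕ} (hn : 0 < n) (hm : 0 < m)
    (B : Matrix (Fin n ⊕ Fin m) (Fin n ⊕ Fin m) ℝ) (hB : IsSusceptance B)
    (k : Fin m → ℝ) (hk : ∀ i, k i < 0)
    (hinv1 : IsUnit (B.toBlocks₂₂ + Matrix.diagonal k).det)
    (hinv2 : IsUnit
      (B.toBlocks₁₁ -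
        B.toBlocks₁₂ * (B.toBlocks₂₂ + Matrix.diagonal k)⁻¹ * B.toBlocks₂₁).det) :
    let Bred := B.toBlocks₁₁ -
      B.toBlocks₁₂ * (B.toBlocks₂₂ + Matrix.diagonal k)⁻¹ * B.toBlocks₂₁
    let W1 := -(Bred⁻¹ * B.toBlocks₁₂ * (B.toBlocks₂₂ + Matrix.diagonal k)⁻¹ *
      Matrix.diagonal k)
    let W2 := (B.toBlocks₂₂ + Matrix.diagonal k)⁻¹ *
      Matrix.fromCols (-B.toBlocks₂₁) (Matrix.diagonal k)
    RowStochastic W1 ∧ RowStochastic W2 ∧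
      ∀ EIstar : Fin m → ℝ, (∀ i, 0 < EIstar i) → ∀ i, 0 < W1.mulVec EIstar i :=
  averaging_matrices_rowStochastic_general B hB k hk hinv2
end

section
/- (Reduced power flow equation for the quadratic droop network) Let B be a susceptance matrix partitioned into load and inverter blocks, K_I a diagonal matrix with strictly negative diagonal entries, and E_I* ∈ ℝ^m strictly positive, with B_II + K_I and B_red invertible. Given load functions Q_i: ℝ_{>0} → ℝ, the following are equivalent: (i) the pair (E_L, E_I) ∈ ℝ^n_{>0} × ℝ^m_{>0} is an equilibrium of the quadratic-droop closed loop; (ii) E_L ∈ ℝ^n_{>0} solves the reduced power flow equation 0 = Q_L(E_L) + [E_L]B_red(E_L − E_L*) and E_I = W_2 applied to (E_L, E_I*), i.e., E_I = (B_II+K_I)^{−1}(−B_IL E_L + K_I E_I*), which moreover has strictly positive entries. -/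
open Matrix

/-! Dividing the inverter equations by the positive voltages `E_I` leaves a linear system whose
unique solution is `E_I = (B_II + K_I)⁻¹(-B_IL E_L + K_I E_I*)`; substituting it into the load
equations turns `B_LL E_L + B_LI E_I` into `B_red (E_L - E_L*)` by the Schur complement identity. -/

namespace Matrix

variable {ι K : Type*} [Fintype ι] [DecidableEq ι] [Field K]

theorem diagonal_mulVec_eq_zero_iff {d v : ι → K} (hd : ∀ i, d i ≠ 0) :
    diagonal d *ᵥ v = 0 ↔ v = 0 := by
  simp [funext_iff, mulVec_diagonal, hd]

theorem eq_inv_mulVec_iff_mulVec_eq {A : Matrix ι ι K} (hA : IsUnit A.det)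
    {x w : ι → K} : x = A⁻¹ *ᵥ w ↔ A *ᵥ x = w := by
  constructor
  · rintro rfl
    rw [mulVec_mulVec, mul_nonsing_inv A hA, one_mulVec]
  · rintro rfl
    rw [mulVec_mulVec, nonsing_inv_mul A hA, one_mulVec]

end Matrix

section Reduction

variable {ι κ K : Type*} [Fintype ι] [DecidableEq ι] [Fintype κ]

theorem inverter_equilibrium_iff [Field K] {B₂₁ : Matrix ι κ K} {B₂₂ : Matrix ι ι K}
    {k e eStar : ι → K} {x : κ → K} (hA : IsUnit (B₂₂ + diagonal k).det) (he : ∀ i, e i ≠ 0) :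
    (0 = diagonal e *ᵥ (diagonal k *ᵥ (e - eStar)) + diagonal e *ᵥ (B₂₁ *ᵥ x + B₂₂ *ᵥ e)) ↔
      e = (B₂₂ + diagonal k)⁻¹ *ᵥ (-(B₂₁ *ᵥ x) + diagonal k *ᵥ eStar) := by
  have hLinear : diagonal k *ᵥ (e - eStar) + (B₂₁ *ᵥ x + B₂₂ *ᵥ e) =
      (B₂₂ + diagonal k) *ᵥ e - (-(B₂₁ *ᵥ x) + diagonal k *ᵥ eStar) := by
    rw [add_mulVec, mulVec_sub]
    abel
  rw [eq_comm, ← mulVec_add, diagonal_mulVec_eq_zero_iff he, hLinear, sub_eq_zero,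
    eq_inv_mulVec_iff_mulVec_eq hA]

theorem schur_complement_substitution [DecidableEq κ] [CommRing K] {B₁₁ : Matrix κ κ K}
    {B₁₂ : Matrix κ ι K} {B₂₁ : Matrix ι κ K} {A D : Matrix ι ι K} {S : Matrix κ κ K}
    (hS : S = B₁₁ - B₁₂ * A⁻¹ * B₂₁) (hSdet : IsUnit S.det) (x : κ → K) (y : ι → K) :
    B₁₁ *ᵥ x + B₁₂ *ᵥ (A⁻¹ *ᵥ (-(B₂₁ *ᵥ x) + D *ᵥ y)) =
      S *ᵥ (x - (-(S⁻¹ * B₁₂ * A⁻¹ * D)) *ᵥ y) := by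
  have hxStar : S *ᵥ ((-(S⁻¹ * B₁₂ * A⁻¹ * D)) *ᵥ y) = -((B₁₂ * A⁻¹ * D) *ᵥ y) := by
    rw [mulVec_mulVec, Matrix.mul_neg, ← Matrix.mul_assoc, ← Matrix.mul_assoc,
      ← Matrix.mul_assoc, mul_nonsing_inv S hSdet, Matrix.one_mul, neg_mulVec]
  rw [mulVec_sub, hxStar, hS, sub_mulVec]
  simp only [mulVec_add, mulVec_neg, mulVec_mulVec, Matrix.mul_assoc]
  abel

end Reduction

theorem reduced_power_flow_equivalence_general {n m : ℕ}
    (B : Matrix (Fin n ⊕ Fin m) (Fin n ⊕ Fin m) ℝ)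
    (k : Fin m → ℝ)
    (EIstar : Fin m → ℝ)
    (hinv1 : IsUnit (B.toBlocks₂₂ + Matrix.diagonal k).det)
    (Bred : Matrix (Fin n) (Fin n) ℝ)
    (hBred : Bred = B.toBlocks₁₁ -
      B.toBlocks₁₂ * (B.toBlocks₂₂ + Matrix.diagonal k)⁻¹ * B.toBlocks₂₁)
    (hinv2 : IsUnit Bred.det)
    (ELstar : Fin n → ℝ)
    (hELstar : ELstar = (-(Bred⁻¹ * B.toBlocks₁₂ *
      (B.toBlocks₂₂ + Matrix.diagonal k)⁻¹ * Matrix.diagonal k)).mulVec EIstar)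
    (Q : Fin n → ℝ → ℝ) (EL : Fin n → ℝ) (EI : Fin m → ℝ) :
    -- (i) (E_L, E_I) is a positive equilibrium of the closed loop
    ((∀ i, 0 < EL i) ∧ (∀ i, 0 < EI i) ∧
      ((0 : Fin n → ℝ) = (fun i => Q i (EL i)) +
        (Matrix.diagonal EL).mulVec (B.toBlocks₁₁.mulVec EL + B.toBlocks₁₂.mulVec EI)) ∧
      ((0 : Fin m → ℝ) =
        (Matrix.diagonal EI).mulVec ((Matrix.diagonal k).mulVec (EI - EIstar)) +
        (Matrix.diagonal EI).mulVec (B.toBlocks₂₁.mulVec EL + B.toBlocks₂₂.mulVec EI)))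
    ↔
    -- (ii) E_L positive solves the reduced power flow equation and E_I is recovered
    ((∀ i, 0 < EL i) ∧
      ((0 : Fin n → ℝ) = (fun i => Q i (EL i)) +
        (Matrix.diagonal EL).mulVec (Bred.mulVec (EL - ELstar))) ∧
      EI = (B.toBlocks₂₂ + Matrix.diagonal k)⁻¹.mulVec
        (-(B.toBlocks₂₁.mulVec EL) + (Matrix.diagonal k).mulVec EIstar) ∧
      (∀ i, 0 < EI i)) := by
  have hEIiff := inverter_equilibrium_iff (B₂₁ := B.toBlocks₂₁) (e := EI) (eStar := EIstar)
    (x := EL) hinv1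
  have hload := schur_complement_substitution (D := diagonal k) hBred hinv2 EL EIstar
  rw [← hELstar] at hload
  constructor
  · rintro ⟨hEL, hEI, hloadEq, hinvEq⟩
    have hEIeq := (hEIiff fun i => (hEI i).ne').1 hinvEq
    exact ⟨hEL, by rwa [← hload, ← hEIeq], hEIeq, hEI⟩
  · rintro ⟨hEL, hred, hEIeq, hEI⟩
    exact ⟨hEL, hEI, by rwa [hEIeq, hload], (hEIiff fun i => (hEI i).ne').2 hEIeq⟩

/-- Reduced power flow equation for the quadratic droop network:
a positive pair `(E_L, E_I)` is an equilibrium of the quadratic-droop closed loop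
iff `E_L` is a positive solution of the reduced power flow equation
`0 = Q_L(E_L) + [E_L] B_red (E_L - E_L*)` and
`E_I = (B_II+K_I)⁻¹(-B_IL E_L + K_I E_I*)`, which is moreover strictly positive. -/
theorem reduced_power_flow_equivalence {n m : ℕ} (hn : 0 < n) (hm : 0 < m)
    (B : Matrix (Fin n ⊕ Fin m) (Fin n ⊕ Fin m) ℝ) (hB : IsSusceptance B)
    (k : Fin m → ℝ) (hk : ∀ i, k i < 0)
    (EIstar : Fin m → ℝ) (hEIstar : ∀ i, 0 < EIstar i)
    (hinv1 : IsUnit (B.toBlocks₂₂ + Matrix.diagonal k).det)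
    (Bred : Matrix (Fin n) (Fin n) ℝ)
    (hBred : Bred = B.toBlocks₁₁ -
      B.toBlocks₁₂ * (B.toBlocks₂₂ + Matrix.diagonal k)⁻¹ * B.toBlocks₂₁)
    (hinv2 : IsUnit Bred.det)
    (ELstar : Fin n → ℝ)
    (hELstar : ELstar = (-(Bred⁻¹ * B.toBlocks₁₂ *
      (B.toBlocks₂₂ + Matrix.diagonal k)⁻¹ * Matrix.diagonal k)).mulVec EIstar)
    (Q : Fin n → ℝ → ℝ) (EL : Fin n → ℝ) (EI : Fin m → ℝ) :
    -- (i) (E_L, E_I) is a positive equilibrium of the closed loop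
    ((∀ i, 0 < EL i) ∧ (∀ i, 0 < EI i) ∧
      ((0 : Fin n → ℝ) = (fun i => Q i (EL i)) +
        (Matrix.diagonal EL).mulVec (B.toBlocks₁₁.mulVec EL + B.toBlocks₁₂.mulVec EI)) ∧
      ((0 : Fin m → ℝ) =
        (Matrix.diagonal EI).mulVec ((Matrix.diagonal k).mulVec (EI - EIstar)) +
        (Matrix.diagonal EI).mulVec (B.toBlocks₂₁.mulVec EL + B.toBlocks₂₂.mulVec EI)))
    ↔
    -- (ii) E_L positive solves the reduced power flow equation and E_I is recovered
    ((∀ i, 0 < EL i) ∧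
      ((0 : Fin n → ℝ) = (fun i => Q i (EL i)) +
        (Matrix.diagonal EL).mulVec (Bred.mulVec (EL - ELstar))) ∧
      EI = (B.toBlocks₂₂ + Matrix.diagonal k)⁻¹.mulVec
        (-(B.toBlocks₂₁.mulVec EL) + (Matrix.diagonal k).mulVec EIstar) ∧
      (∀ i, 0 < EI i)) :=
  reduced_power_flow_equivalence_general B k EIstar hinv1 Bred hBred hinv2 ELstar hELstar Q EL EI
end

section
/- (Sufficient condition for the reduced Jacobian to be Hurwitz) Let each load function Q_i be differentiable with dQ_i/dE_i(E_{L,i}) ≤ 0 at a solution E_L ∈ ℝ^n_{>0} of the reduced power flow equation 0 = Q_L(E_L) + [E_L]B_red(E_L − E_L*). If the matrix [E_L]^{−2}[Q_L(E_L)] − B_red is positive definite (i.e., B_red ≺ [E_L]^{−2}[Q_L(E_L)]), then the reduced Jacobian J_red(E_L) = (∂Q_L/∂E_L)(E_L) + [E_L]B_red + [B_red(E_L − E_L*)] is Hurwitz. -/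
/-!
Multiplying by the positive diagonal matrix `[E_L]⁻¹` and using the power flow equation to replace
`B_red (E_L - E_L*)` by `-[E_L]⁻¹ Q_L(E_L)` turns `J_red` into `-N` with
`N = [E_L]⁻²[Q_L(E_L)] - [E_L]⁻¹ (∂Q_L/∂E_L) - B_red`, which is positive definite because the
derivatives are nonpositive. If `J_red v = μ v`, then `μ (v* [E_L]⁻¹ v) = -(v* N v)`, and both
quadratic forms have positive real part, so `Re μ < 0`.
-/

open Matrix
open scoped ComplexOrder

def IsHurwitz {n : ℕ} (A : Matrix (Fin n) (Fin n) ℝ) : Prop :=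
  ∀ μ ∈ spectrum ℂ (A.map Complex.ofReal), μ.re < 0

namespace Matrix

variable {n : Type*} [Fintype n]

theorem re_star_dotProduct_map_ofReal_mulVec (P : Matrix n n ℝ) (v : n → ℂ) :
    (star v ⬝ᵥ P.map Complex.ofReal *ᵥ v).re =
      (fun i ↦ (v i).re) ⬝ᵥ P *ᵥ (fun i ↦ (v i).re) +
        (fun i ↦ (v i).im) ⬝ᵥ P *ᵥ (fun i ↦ (v i).im) := by
  simp only [dotProduct, mulVec, map_apply, Pi.star_apply, Complex.re_sum, Complex.mul_re,
    Complex.mul_im, Complex.ofReal_re, Complex.ofReal_im, RCLike.star_def,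
    Complex.conj_re, Complex.conj_im, Finset.mul_sum, ← Finset.sum_add_distrib]
  refine Finset.sum_congr rfl fun i _ ↦ Finset.sum_congr rfl fun j _ ↦ ?_
  ring

theorem PosDef.map_ofReal {P : Matrix n n ℝ} (hP : P.PosDef) : (P.map Complex.ofReal).PosDef := by
  have hherm : (P.map Complex.ofReal).IsHermitian :=
    hP.isHermitian.map _ fun x ↦ (Complex.conj_ofReal x).symm
  refine .of_dotProduct_mulVec_pos hherm fun v hv ↦ Complex.lt_def.mpr ⟨?_, ?_⟩
  · have hparts : (fun i ↦ (v i).re) ≠ 0 ∨ (fun i ↦ (v i).im) ≠ 0 := by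
      contrapose! hv
      exact funext fun i ↦ Complex.ext (congrFun hv.1 i) (congrFun hv.2 i)
    rw [re_star_dotProduct_map_ofReal_mulVec]
    rcases hparts with hre | him
    · exact add_pos_of_pos_of_nonneg (hP.dotProduct_mulVec_pos hre)
        (hP.posSemidef.dotProduct_mulVec_nonneg _)
    · exact add_pos_of_nonneg_of_pos (hP.posSemidef.dotProduct_mulVec_nonneg _)
        (hP.dotProduct_mulVec_pos him)
  · exact (hherm.im_star_dotProduct_mulVec_self v).symm

theorem re_lt_zero_of_mem_spectrum_of_mul_eq_neg {𝕜 : Type*} [RCLike 𝕜] [DecidableEq n]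
    {A W N : Matrix n n 𝕜} (hW : W.PosDef) (hN : N.PosDef) (hWA : W * A = -N) {μ : 𝕜}
    (hμ : μ ∈ spectrum 𝕜 A) : RCLike.re μ < 0 := by
  obtain ⟨v, hv⟩ := (Module.End.hasEigenvalue_iff_mem_spectrum.mpr
    ((spectrum_toLin' A).symm ▸ hμ)).exists_hasEigenvector
  have hAv : A *ᵥ v = μ • v := by simpa using hv.apply_eq_smul
  have hquad : μ * (star v ⬝ᵥ W *ᵥ v) = -(star v ⬝ᵥ N *ᵥ v) := by
    rw [← dotProduct_neg, ← neg_mulVec, ← hWA, ← mulVec_mulVec, hAv, mulVec_smul,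
      dotProduct_smul, smul_eq_mul]
  have hWre := hW.re_dotProduct_pos hv.2
  have hNre := hN.re_dotProduct_pos hv.2
  have hWim := hW.isHermitian.im_star_dotProduct_mulVec_self v
  have hre := congrArg RCLike.re hquad
  rw [RCLike.mul_re, hWim, mul_zero, sub_zero, map_neg] at hre
  nlinarith

end Matrix

theorem isHurwitz_of_mul_eq_neg {n : ℕ} {A W N : Matrix (Fin n) (Fin n) ℝ} (hW : W.PosDef)
    (hN : N.PosDef) (hWA : W * A = -N) : IsHurwitz A := by
  refine fun μ ↦ re_lt_zero_of_mem_spectrum_of_mul_eq_neg hW.map_ofReal hN.map_ofReal ?_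
  have := congrArg Complex.ofRealHom.mapMatrix hWA
  rwa [map_mul, map_neg] at this

section ReducedJacobian

variable {ι : Type*} [Fintype ι] [DecidableEq ι]

noncomputable def reducedJacobian (B : Matrix ι ι ℝ) (Estar : ι → ℝ) (Q : ι → ℝ → ℝ)
    (E : ι → ℝ) : Matrix ι ι ℝ :=
  diagonal (fun i ↦ deriv (Q i) (E i)) + diagonal E * B + diagonal (B *ᵥ (E - Estar))

theorem diagonal_inv_mul_reducedJacobian {B : Matrix ι ι ℝ} {Estar : ι → ℝ} {Q : ι → ℝ → ℝ}
    {E : ι → ℝ} (hE : ∀ i, E i ≠ 0)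
    (hsol : 0 = (fun i ↦ Q i (E i)) + diagonal E *ᵥ (B *ᵥ (E - Estar))) :
    diagonal E⁻¹ * reducedJacobian B Estar Q E =
      -(diagonal (fun i ↦ Q i (E i) / E i ^ 2 - deriv (Q i) (E i) / E i) - B) := by
  have hflow : ∀ i, (B *ᵥ (E - Estar)) i = -Q i (E i) / E i := fun i ↦ by
    have := congrFun hsol i
    simp only [Pi.zero_apply, Pi.add_apply, mulVec_diagonal] at this
    field_simp [hE i]
    linarith
  have hunit : diagonal E⁻¹ * diagonal E = 1 := by
    rw [diagonal_mul_diagonal, ← diagonal_one]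
    exact congrArg diagonal (funext fun i ↦ inv_mul_cancel₀ (hE i))
  rw [reducedJacobian, mul_add, mul_add, ← mul_assoc, hunit, one_mul, diagonal_mul_diagonal,
    diagonal_mul_diagonal]
  ext i j
  rcases eq_or_ne i j with rfl | hij
  · simp only [Matrix.add_apply, diagonal_apply_eq, Matrix.neg_apply, Matrix.sub_apply,
      Pi.inv_apply, hflow]
    field_simp [hE i]
    ring
  · simp [diagonal_apply_ne _ hij]

end ReducedJacobian

theorem reduced_jacobian_hurwitz_general {n : ℕ}
    (Bred : Matrix (Fin n) (Fin n) ℝ)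
    (ELstar : Fin n → ℝ) (Q : Fin n → ℝ → ℝ)
    (EL : Fin n → ℝ) (hEL : ∀ i, 0 < EL i)
    (hderiv : ∀ i, deriv (Q i) (EL i) ≤ 0)
    (hsol : (0 : Fin n → ℝ) = (fun i => Q i (EL i)) +
      (Matrix.diagonal EL).mulVec (Bred.mulVec (EL - ELstar)))
    (hpd : (Matrix.diagonal (fun i => Q i (EL i) / (EL i) ^ 2) - Bred).PosDef) :
    IsHurwitz (Matrix.diagonal (fun i => deriv (Q i) (EL i)) +
      Matrix.diagonal EL * Bred + Matrix.diagonal (Bred.mulVec (EL - ELstar))) := by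
  have hdamping : (diagonal fun i ↦ -deriv (Q i) (EL i) / EL i).PosSemidef :=
    .diagonal fun i ↦ div_nonneg (neg_nonneg.mpr (hderiv i)) (hEL i).le
  have hN :
      (diagonal (fun i ↦ Q i (EL i) / EL i ^ 2 - deriv (Q i) (EL i) / EL i) - Bred).PosDef := by
    convert hpd.add_posSemidef hdamping using 1
    rw [sub_add_eq_add_sub, diagonal_add]
    congr 2
    funext i
    ring
  exact isHurwitz_of_mul_eq_neg (posDef_diagonal_iff.mpr fun i ↦ inv_pos.mpr (hEL i)) hN
    (diagonal_inv_mul_reducedJacobian (fun i ↦ (hEL i).ne') hsol)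

/-- Sufficient condition for the reduced Jacobian to be Hurwitz:
if each load function has nonpositive derivative at a positive solution `E_L` of the
reduced power flow equation and `[E_L]⁻²[Q_L(E_L)] - B_red` is positive definite
(i.e. `B_red ≺ [E_L]⁻²[Q_L(E_L)]`), then the reduced Jacobian
`J_red(E_L) = (∂Q_L/∂E_L)(E_L) + [E_L]B_red + [B_red(E_L - E_L*)]` is Hurwitz. -/
theorem reduced_jacobian_hurwitz {n : ℕ} (hn : 0 < n)
    (Bred : Matrix (Fin n) (Fin n) ℝ) (hsym : Bred.IsSymm)
    (ELstar : Fin n → ℝ) (Q : Fin n → ℝ → ℝ)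
    (EL : Fin n → ℝ) (hEL : ∀ i, 0 < EL i)
    (hdiff : ∀ i, DifferentiableAt ℝ (Q i) (EL i))
    (hderiv : ∀ i, deriv (Q i) (EL i) ≤ 0)
    (hsol : (0 : Fin n → ℝ) = (fun i => Q i (EL i)) +
      (Matrix.diagonal EL).mulVec (Bred.mulVec (EL - ELstar)))
    (hpd : (Matrix.diagonal (fun i => Q i (EL i) / (EL i) ^ 2) - Bred).PosDef) :
    IsHurwitz (Matrix.diagonal (fun i => deriv (Q i) (EL i)) +
      Matrix.diagonal EL * Bred + Matrix.diagonal (Bred.mulVec (EL - ELstar))) :=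
  reduced_jacobian_hurwitz_general Bred ELstar Q EL hEL hderiv hsol hpd
end

section
/- (Schur-complement form of the linearization at equilibrium) Let (E_L, E_I) ∈ ℝ^n_{>0} × ℝ^m_{>0} be an equilibrium of the quadratic-droop closed loop with differentiable load functions Q_i. Let E = (E_L, E_I), let D be the diagonal matrix with D_{ii} = dQ_i/dE_i(E_{L,i}) for loads i ∈ L and D_{ii} = K_i(2E_i − E_i*) for inverters i ∈ I, and set M := B + [E]^{−1}([B E] + D). Then M has the block form M = [[M_{11}, B_LI],[B_IL, B_II + K_I]] with M_{11} = [E_L]^{−1}(∂Q_L/∂E_L)(E_L) + B_LL + [E_L]^{−1}[B_red(E_L − E_L*)], and the Schur complement of M with respect to the block B_II + K_I satisfies M_{11} − B_LI(B_II+K_I)^{−1}B_IL = [E_L]^{−1}J_red(E_L). -/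
/-!
At equilibrium the inverter balance `K_I (E_I - E_I⋆) + B_IL E_L + B_II E_I = 0` does two jobs.
It makes the inverter entries of the diagonal correction `[E]⁻¹([B E] + D)` collapse to `K_I`,
and solving it for `E_I` (Kron reduction) turns the load flow `B_LL E_L + B_LI E_I` into
`B_red (E_L - E_L⋆)`. So `M` is `B` plus a block-diagonal matrix, and the Schur complement
identity reduces to `[E_L]⁻¹ [E_L] B_red = B_red`.
-/

open Matrix

namespace Matrix

variable {l m α : Type*}

theorem mulVec_sumElim [Fintype l] [Fintype m] [NonUnitalNonAssocSemiring α]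
    (B : Matrix (l ⊕ m) (l ⊕ m) α) (x : l → α) (y : m → α) :
    B *ᵥ Sum.elim x y = Sum.elim (B.toBlocks₁₁ *ᵥ x + B.toBlocks₁₂ *ᵥ y)
      (B.toBlocks₂₁ *ᵥ x + B.toBlocks₂₂ *ᵥ y) := by
  conv_lhs => rw [← fromBlocks_toBlocks B]
  rw [fromBlocks_mulVec]
  rfl

theorem add_diagonal_sumElim [DecidableEq l] [DecidableEq m] [AddZeroClass α]
    (B : Matrix (l ⊕ m) (l ⊕ m) α) (a : l → α) (b : m → α) :
    B + diagonal (Sum.elim a b) =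
      fromBlocks (B.toBlocks₁₁ + diagonal a) B.toBlocks₁₂ B.toBlocks₂₁
        (B.toBlocks₂₂ + diagonal b) := by
  conv_lhs => rw [← fromBlocks_toBlocks B, ← fromBlocks_diagonal, fromBlocks_add]
  simp only [add_zero]

theorem eq_zero_of_diagonal_mulVec_eq_zero [Fintype m] [DecidableEq m] [Semiring α]
    [NoZeroDivisors α] {d v : m → α} (hd : ∀ i, d i ≠ 0) (h : diagonal d *ᵥ v = 0) : v = 0 := by
  funext i
  have hi := congrFun h i
  rw [mulVec_diagonal, Pi.zero_apply] at hi
  exact (mul_eq_zero.mp hi).resolve_left (hd i)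

theorem diagonal_inv_mul_diagonal [Fintype m] [DecidableEq m] [DivisionRing α] {d : m → α}
    (hd : ∀ i, d i ≠ 0) :
    diagonal (fun i => (d i)⁻¹) * diagonal d = 1 := by
  rw [diagonal_mul_diagonal, ← diagonal_one]
  exact congrArg diagonal (funext fun i => inv_mul_cancel₀ (hd i))

theorem mulVec_add_mulVec_eq_kron_reduction [Fintype l] [Fintype m] [DecidableEq l]
    [DecidableEq m] [CommRing α] {A Bred : Matrix l l α} {R : Matrix l m α}
    {C : Matrix m l α} {T K : Matrix m m α} (hTK : IsUnit (T + K).det)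
    (hBred : Bred = A - R * (T + K)⁻¹ * C) (hBred_inv : IsUnit Bred.det)
    {x xstar : m → α} {y ystar : l → α}
    (hystar : ystar = (-(Bred⁻¹ * R * (T + K)⁻¹ * K)) *ᵥ xstar)
    (hbal : K *ᵥ (x - xstar) + (C *ᵥ y + T *ᵥ x) = 0) :
    A *ᵥ y + R *ᵥ x = Bred *ᵥ (y - ystar) := by
  have hx : x = (T + K)⁻¹ *ᵥ (K *ᵥ xstar - C *ᵥ y) := by
    have h : (T + K) *ᵥ x = K *ᵥ xstar - C *ᵥ y := by
      rw [add_mulVec]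
      rw [mulVec_sub] at hbal
      linear_combination hbal
    rw [← h, mulVec_mulVec, nonsing_inv_mul _ hTK, one_mulVec]
  have hBred_ystar : Bred *ᵥ ystar = -((R * (T + K)⁻¹ * K) *ᵥ xstar) := by
    rw [hystar, mulVec_mulVec, Matrix.mul_neg, neg_mulVec]
    simp only [Matrix.mul_assoc, mul_nonsing_inv_cancel_left _ _ hBred_inv]
  rw [mulVec_sub, hBred_ystar, sub_neg_eq_add, hBred, hx]
  simp only [mulVec_mulVec, mulVec_sub, sub_mulVec, Matrix.mul_assoc]
  abel

end Matrix

theorem inv_mul_add_droop_eq {F : Type*} [Field F] {e estar k s : F} (he : e ≠ 0)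
    (hbal : k * (e - estar) + s = 0) :
    e⁻¹ * (s + k * (2 * e - estar)) = k := by
  field_simp
  linear_combination hbal

theorem linearization_schur_complement_general {n m : ℕ}
    (B : Matrix (Fin n ⊕ Fin m) (Fin n ⊕ Fin m) ℝ)
    (k : Fin m → ℝ)
    (EIstar : Fin m → ℝ)
    (hinv1 : IsUnit (B.toBlocks₂₂ + Matrix.diagonal k).det)
    (Bred : Matrix (Fin n) (Fin n) ℝ)
    (hBred : Bred = B.toBlocks₁₁ -
      B.toBlocks₁₂ * (B.toBlocks₂₂ + Matrix.diagonal k)⁻¹ * B.toBlocks₂₁)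
    (hinv2 : IsUnit Bred.det)
    (ELstar : Fin n → ℝ)
    (hELstar : ELstar = (-(Bred⁻¹ * B.toBlocks₁₂ *
      (B.toBlocks₂₂ + Matrix.diagonal k)⁻¹ * Matrix.diagonal k)).mulVec EIstar)
    (Q : Fin n → ℝ → ℝ) (EL : Fin n → ℝ) (EI : Fin m → ℝ)
    (hEL : ∀ i, 0 < EL i) (hEI : ∀ i, 0 < EI i)
    (heq2 : (0 : Fin m → ℝ) =
      (Matrix.diagonal EI).mulVec ((Matrix.diagonal k).mulVec (EI - EIstar)) +
      (Matrix.diagonal EI).mulVec (B.toBlocks₂₁.mulVec EL + B.toBlocks₂₂.mulVec EI)) :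
    let E : Fin n ⊕ Fin m → ℝ := Sum.elim EL EI
    let D : Matrix (Fin n ⊕ Fin m) (Fin n ⊕ Fin m) ℝ :=
      Matrix.diagonal (Sum.elim (fun i => deriv (Q i) (EL i))
        (fun i => k i * (2 * EI i - EIstar i)))
    let M := B + Matrix.diagonal (fun i => (E i)⁻¹) *
      (Matrix.diagonal (B.mulVec E) + D)
    let M11 := Matrix.diagonal (fun i => (EL i)⁻¹) *
        Matrix.diagonal (fun i => deriv (Q i) (EL i)) + B.toBlocks₁₁ +
        Matrix.diagonal (fun i => (EL i)⁻¹) *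
          Matrix.diagonal (Bred.mulVec (EL - ELstar))
    let Jred := Matrix.diagonal (fun i => deriv (Q i) (EL i)) +
      Matrix.diagonal EL * Bred + Matrix.diagonal (Bred.mulVec (EL - ELstar))
    M.toBlocks₁₁ = M11 ∧ M.toBlocks₁₂ = B.toBlocks₁₂ ∧ M.toBlocks₂₁ = B.toBlocks₂₁ ∧
      M.toBlocks₂₂ = B.toBlocks₂₂ + Matrix.diagonal k ∧
      M11 - B.toBlocks₁₂ * (B.toBlocks₂₂ + Matrix.diagonal k)⁻¹ * B.toBlocks₂₁ =
        Matrix.diagonal (fun i => (EL i)⁻¹) * Jred := by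
  intro E D M M11 Jred
  set a : Fin n → ℝ := fun i => (EL i)⁻¹ * (deriv (Q i) (EL i) + (Bred *ᵥ (EL - ELstar)) i)
  have hbal : diagonal k *ᵥ (EI - EIstar) + (B.toBlocks₂₁ *ᵥ EL + B.toBlocks₂₂ *ᵥ EI) = 0 :=
    eq_zero_of_diagonal_mulVec_eq_zero (fun i => (hEI i).ne')
      (by rw [mulVec_add]; exact heq2.symm)
  have hload : B.toBlocks₁₁ *ᵥ EL + B.toBlocks₁₂ *ᵥ EI = Bred *ᵥ (EL - ELstar) :=
    mulVec_add_mulVec_eq_kron_reduction hinv1 hBred hinv2 hELstar hbal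
  have hcorr : diagonal (fun i => (E i)⁻¹) * (diagonal (B *ᵥ E) + D) =
      diagonal (Sum.elim a k) := by
    rw [diagonal_add, diagonal_mul_diagonal, mulVec_sumElim, hload]
    refine congrArg diagonal (funext fun i => ?_)
    rcases i with i | i
    · simp only [E, a, Sum.elim_inl]
      ring
    · simp only [E, Sum.elim_inr, Pi.add_apply]
      refine inv_mul_add_droop_eq (hEI i).ne' ?_
      simpa only [mulVec_diagonal, Pi.add_apply, Pi.sub_apply, Pi.zero_apply]
        using congrFun hbal i
  have hM11 : M11 = B.toBlocks₁₁ + diagonal a := by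
    simp only [M11, a, diagonal_mul_diagonal, mul_add, ← diagonal_add]
    abel
  have hM : M = fromBlocks M11 B.toBlocks₁₂ B.toBlocks₂₁ (B.toBlocks₂₂ + diagonal k) := by
    rw [hM11, ← add_diagonal_sumElim]
    exact congrArg (B + ·) hcorr
  have hschur : M11 - B.toBlocks₁₂ * (B.toBlocks₂₂ + diagonal k)⁻¹ * B.toBlocks₂₁ =
      diagonal (fun i => (EL i)⁻¹) * Jred := by
    simp only [M11, Jred]
    rw [Matrix.mul_add, Matrix.mul_add, ← Matrix.mul_assoc,
      diagonal_inv_mul_diagonal (fun i => (hEL i).ne'), Matrix.one_mul, hBred]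
    abel
  rw [hM]
  exact ⟨toBlocks_fromBlocks₁₁ .., toBlocks_fromBlocks₁₂ .., toBlocks_fromBlocks₂₁ ..,
    toBlocks_fromBlocks₂₂ .., hschur⟩

/-- Schur-complement form of the linearization at equilibrium:
at a positive equilibrium `(E_L, E_I)`, the matrix `M = B + [E]⁻¹([BE] + D)` has
the stated block structure and the Schur complement of `M` with respect to the
block `B_II + K_I` equals `[E_L]⁻¹ J_red(E_L)`. -/
theorem linearization_schur_complement {n m : ℕ} (hn : 0 < n) (hm : 0 < m)
    (B : Matrix (Fin n ⊕ Fin m) (Fin n ⊕ Fin m) ℝ) (hB : IsSusceptance B)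
    (k : Fin m → ℝ) (hk : ∀ i, k i < 0)
    (EIstar : Fin m → ℝ) (hEIstar : ∀ i, 0 < EIstar i)
    (hinv1 : IsUnit (B.toBlocks₂₂ + Matrix.diagonal k).det)
    (Bred : Matrix (Fin n) (Fin n) ℝ)
    (hBred : Bred = B.toBlocks₁₁ -
      B.toBlocks₁₂ * (B.toBlocks₂₂ + Matrix.diagonal k)⁻¹ * B.toBlocks₂₁)
    (hinv2 : IsUnit Bred.det)
    (ELstar : Fin n → ℝ)
    (hELstar : ELstar = (-(Bred⁻¹ * B.toBlocks₁₂ *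
      (B.toBlocks₂₂ + Matrix.diagonal k)⁻¹ * Matrix.diagonal k)).mulVec EIstar)
    (Q : Fin n → ℝ → ℝ) (EL : Fin n → ℝ) (EI : Fin m → ℝ)
    (hEL : ∀ i, 0 < EL i) (hEI : ∀ i, 0 < EI i)
    (hdiff : ∀ i, DifferentiableAt ℝ (Q i) (EL i))
    (heq1 : (0 : Fin n → ℝ) = (fun i => Q i (EL i)) +
      (Matrix.diagonal EL).mulVec (B.toBlocks₁₁.mulVec EL + B.toBlocks₁₂.mulVec EI))
    (heq2 : (0 : Fin m → ℝ) =
      (Matrix.diagonal EI).mulVec ((Matrix.diagonal k).mulVec (EI - EIstar)) +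
      (Matrix.diagonal EI).mulVec (B.toBlocks₂₁.mulVec EL + B.toBlocks₂₂.mulVec EI)) :
    let E : Fin n ⊕ Fin m → ℝ := Sum.elim EL EI
    let D : Matrix (Fin n ⊕ Fin m) (Fin n ⊕ Fin m) ℝ :=
      Matrix.diagonal (Sum.elim (fun i => deriv (Q i) (EL i))
        (fun i => k i * (2 * EI i - EIstar i)))
    let M := B + Matrix.diagonal (fun i => (E i)⁻¹) *
      (Matrix.diagonal (B.mulVec E) + D)
    let M11 := Matrix.diagonal (fun i => (EL i)⁻¹) *
        Matrix.diagonal (fun i => deriv (Q i) (EL i)) + B.toBlocks₁₁ +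
        Matrix.diagonal (fun i => (EL i)⁻¹) *
          Matrix.diagonal (Bred.mulVec (EL - ELstar))
    let Jred := Matrix.diagonal (fun i => deriv (Q i) (EL i)) +
      Matrix.diagonal EL * Bred + Matrix.diagonal (Bred.mulVec (EL - ELstar))
    M.toBlocks₁₁ = M11 ∧ M.toBlocks₁₂ = B.toBlocks₁₂ ∧ M.toBlocks₂₁ = B.toBlocks₂₁ ∧
      M.toBlocks₂₂ = B.toBlocks₂₂ + Matrix.diagonal k ∧
      M11 - B.toBlocks₁₂ * (B.toBlocks₂₂ + Matrix.diagonal k)⁻¹ * B.toBlocks₂₁ =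
        Matrix.diagonal (fun i => (EL i)⁻¹) * Jred :=
  linearization_schur_complement_general B k EIstar hinv1 Bred hBred hinv2 ELstar hELstar Q EL EI
    hEL hEI heq2
end

section
/- (Jacobian at the ZI solution is Hurwitz) Under the hypotheses that −(B_red + [b_shunt]) is positive definite with nonpositive off-diagonal entries and I_shunt > B_red E_L* componentwise, let E_L^{ZI} := (B_red + [b_shunt])^{−1}(B_red E_L* − I_shunt) ∈ ℝ^n_{>0}. Then the Jacobian of the map F(E_L) := [E_L][b_shunt]E_L + [E_L]I_shunt + [E_L]B_red(E_L − E_L*) evaluated at E_L^{ZI} equals [E_L^{ZI}](B_red + [b_shunt]), and this matrix is Hurwitz (all its eigenvalues are real and strictly negative). -/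
/-!
Write `M = B_red + [b_shunt]`. The ZI equilibrium solves `(-M) E = I_shunt - B_red E_L* > 0`,
and `-M` is a positive definite Z-matrix, hence inverse-positive: splitting `E = E⁺ - E⁻`, the
off-diagonal sign pattern gives `E⁻ᵀ(-M)E⁺ ≤ 0`, so `E⁻ᵀ(-M)E⁻ ≤ -E⁻ᵀ(I_shunt - B_red E_L*) ≤ 0`
forces `E⁻ = 0`, and then every row of `(-M)E` shows `E > 0`.

Since `F(E) = [E](M E + B_red E_L* - I_shunt)` and the second factor vanishes at the equilibrium,
the Jacobian there is `[E]M`. If `[E]M v = μ v` with `v ≠ 0`, then `(-M) v = -μ [E]⁻¹ v`, and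
taking the Hermitian form with `v` of both positive definite matrices shows `-μ > 0`.
-/

open Matrix ComplexOrder

namespace Matrix

variable {ι : Type*} [Fintype ι]

section ZMatrix

variable {N : Matrix ι ι ℝ}

theorem dotProduct_mulVec_nonpos_of_offDiag_nonpos (hN : ∀ i j, i ≠ j → N i j ≤ 0)
    {u v : ι → ℝ} (hu : 0 ≤ u) (hv : 0 ≤ v) (huv : ∀ i, u i * v i = 0) :
    u ⬝ᵥ N *ᵥ v ≤ 0 := by
  rw [dot_mulVec_eq_sum_sum]
  refine Finset.sum_nonpos fun j _ => Finset.sum_nonpos fun i _ => ?_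
  rcases eq_or_ne i j with rfl | hij
  · rw [mul_right_comm, huv i, zero_mul]
  · exact mul_nonpos_of_nonpos_of_nonneg
      (mul_nonpos_of_nonneg_of_nonpos (hu i) (hN i j hij)) (hv j)

theorem PosDef.nonneg_of_mulVec_nonneg (hpd : N.PosDef) (hN : ∀ i j, i ≠ j → N i j ≤ 0)
    {x : ι → ℝ} (hx : 0 ≤ N *ᵥ x) : 0 ≤ x := by
  suffices x⁻ = 0 by simpa using this
  by_contra hne
  have hpos : 0 < x⁻ ⬝ᵥ N *ᵥ x⁻ := by simpa using hpd.dotProduct_mulVec_pos hne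
  have hdisj : ∀ i, x⁻ i * x⁺ i = 0 := fun i => by
    rcases le_total (x i) 0 with h | h
    · simp [posPart_eq_zero.mpr h]
    · simp [negPart_eq_zero.mpr h]
  have hsplit : x⁻ ⬝ᵥ N *ᵥ x = x⁻ ⬝ᵥ N *ᵥ x⁺ - x⁻ ⬝ᵥ N *ᵥ x⁻ := by
    rw [← dotProduct_sub, ← mulVec_sub, posPart_sub_negPart]
  have hcross : x⁻ ⬝ᵥ N *ᵥ x⁺ ≤ 0 :=
    dotProduct_mulVec_nonpos_of_offDiag_nonpos hN (negPart_nonneg x) (posPart_nonneg x) hdisj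
  have hrhs : 0 ≤ x⁻ ⬝ᵥ N *ᵥ x := dotProduct_nonneg_of_nonneg (negPart_nonneg x) hx
  linarith

theorem PosDef.pos_of_mulVec_pos (hpd : N.PosDef) (hN : ∀ i j, i ≠ j → N i j ≤ 0)
    {x : ι → ℝ} (hx : ∀ i, 0 < (N *ᵥ x) i) (i : ι) : 0 < x i := by
  have hx0 : 0 ≤ x := hpd.nonneg_of_mulVec_nonneg hN fun j => (hx j).le
  refine (hx0 i).lt_of_ne' fun hxi => (hx i).not_ge ?_
  rw [mulVec, dotProduct]
  refine Finset.sum_nonpos fun j _ => ?_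
  rcases eq_or_ne i j with rfl | hij
  · simp [hxi]
  · exact mul_nonpos_of_nonpos_of_nonneg (hN i j hij) (hx0 j)

end ZMatrix

theorem star_dotProduct_map_ofReal_mulVec (N : Matrix ι ι ℝ) (v : ι → ℂ) :
    star v ⬝ᵥ N.map Complex.ofReal *ᵥ v =
      ↑((fun i => (v i).re) ⬝ᵥ N *ᵥ fun i => (v i).re) +
        ↑((fun i => (v i).im) ⬝ᵥ N *ᵥ fun i => (v i).im) +
        (↑((fun i => (v i).re) ⬝ᵥ N *ᵥ fun i => (v i).im) -
          ↑((fun i => (v i).im) ⬝ᵥ N *ᵥ fun i => (v i).re)) * Complex.I := by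
  simp only [dot_mulVec_eq_sum_sum, Complex.ofReal_sum, ← Finset.sum_add_distrib,
    ← Finset.sum_sub_distrib, Finset.sum_mul]
  refine Finset.sum_congr rfl fun j _ => Finset.sum_congr rfl fun i _ => ?_
  apply Complex.ext
  · simp
  · simp; ring

theorem PosDef.map_ofReal_s9 {N : Matrix ι ι ℝ} (hN : N.PosDef) :
    (N.map Complex.ofReal).PosDef := by
  refine posDef_iff_dotProduct_mulVec.mpr
    ⟨hN.1.map _ fun _ => (Complex.conj_ofReal _).symm, fun v hv => ?_⟩
  set x : ι → ℝ := fun i => (v i).re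
  set y : ι → ℝ := fun i => (v i).im
  have hxy : x ≠ 0 ∨ y ≠ 0 := by
    by_contra! h
    exact hv (funext fun i => Complex.ext (congrFun h.1 i) (congrFun h.2 i))
  have hnonneg : ∀ z : ι → ℝ, 0 ≤ z ⬝ᵥ N *ᵥ z := fun z => by
    simpa using hN.posSemidef.dotProduct_mulVec_nonneg z
  have hpos : 0 < x ⬝ᵥ N *ᵥ x + y ⬝ᵥ N *ᵥ y := by
    rcases hxy with h | h
    · exact add_pos_of_pos_of_nonneg (by simpa using hN.dotProduct_mulVec_pos h) (hnonneg y)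
    · exact add_pos_of_nonneg_of_pos (hnonneg x) (by simpa using hN.dotProduct_mulVec_pos h)
  have hsymm : x ⬝ᵥ N *ᵥ y = y ⬝ᵥ N *ᵥ x := by
    rw [dotProduct_mulVec, ← mulVec_transpose, dotProduct_comm,
      (isHermitian_iff_isSymm.mp hN.1).eq]
  rw [star_dotProduct_map_ofReal_mulVec, hsymm, sub_self, zero_mul, add_zero,
    ← Complex.ofReal_add]
  exact Complex.zero_lt_real.mpr hpos

theorem pos_of_mulVec_eq_smul_mulVec {A B : Matrix ι ι ℂ} (hA : A.PosDef) (hB : B.PosDef)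
    {v : ι → ℂ} (hv : v ≠ 0) {μ : ℂ} (h : A *ᵥ v = μ • B *ᵥ v) : 0 < μ := by
  have hAv := hA.dotProduct_mulVec_pos hv
  rw [h, dotProduct_smul, smul_eq_mul] at hAv
  exact (pos_iff_pos_of_mul_pos hAv).mpr (hB.dotProduct_mulVec_pos hv)

variable [DecidableEq ι]

theorem exists_mulVec_eq_smul_of_mem_spectrum {K : Type*} [Field K] {A : Matrix ι ι K} {μ : K}
    (hμ : μ ∈ spectrum K A) : ∃ v ≠ 0, A *ᵥ v = μ • v := by
  rw [← spectrum_toLin', ← Module.End.hasEigenvalue_iff_mem_spectrum] at hμ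
  obtain ⟨v, hv⟩ := hμ.exists_hasEigenvector
  exact ⟨v, hv.2, hv.apply_eq_smul⟩

theorem neg_of_mem_spectrum_diagonal_mul {M : Matrix ι ι ℝ} (hM : (-M).PosDef) {d : ι → ℝ}
    (hd : ∀ i, 0 < d i) {μ : ℂ} (hμ : μ ∈ spectrum ℂ ((diagonal d * M).map Complex.ofReal)) :
    μ < 0 := by
  obtain ⟨v, hv, heig⟩ := exists_mulVec_eq_smul_of_mem_spectrum hμ
  have hdinv : (diagonal fun i => ((d i : ℂ))⁻¹).PosDef :=
    posDef_diagonal_iff.mpr fun i => inv_pos.mpr (Complex.zero_lt_real.mpr (hd i))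
  have hmap : (diagonal d * M).map Complex.ofReal =
      diagonal (fun i => (d i : ℂ)) * M.map Complex.ofReal := by
    ext i j
    simp [diagonal_mul]
  have hpencil :
      (-M).map Complex.ofReal *ᵥ v = (-μ) • diagonal (fun i => ((d i : ℂ))⁻¹) *ᵥ v := by
    ext i
    have hi := congrFun heig i
    have hdi : (d i : ℂ) ≠ 0 := Complex.ofReal_ne_zero.mpr (hd i).ne'
    rw [hmap, ← mulVec_mulVec, mulVec_diagonal, Pi.smul_apply, smul_eq_mul] at hi
    rw [Matrix.map_neg _ Complex.ofReal_neg, neg_mulVec, Pi.neg_apply, Pi.smul_apply,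
      mulVec_diagonal, smul_eq_mul]
    field_simp
    linear_combination -hi
  exact neg_pos.mp (pos_of_mulVec_eq_smul_mulVec hM.map_ofReal_s9 hdinv hv hpencil)

theorem hasFDerivAt_mul_mulVec_add_const_of_eq_zero (M : Matrix ι ι ℝ) {c x₀ : ι → ℝ}
    (h : M *ᵥ x₀ + c = 0) :
    HasFDerivAt (fun x => x * (M *ᵥ x + c))
      (mulVecLin (diagonal x₀ * M)).toContinuousLinearMap x₀ := by
  refine ((hasFDerivAt_id x₀).mul
    ((mulVecLin M).toContinuousLinearMap.hasFDerivAt.add_const c)).congr_fderiv ?_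
  ext y i
  simp [h, mulVec_diagonal]

end Matrix

theorem ZI_jacobian_hurwitz_general {n : ℕ}
    (Bred : Matrix (Fin n) (Fin n) ℝ)
    (ELstar bshunt Ishunt : Fin n → ℝ)
    (hM1 : (-(Bred + Matrix.diagonal bshunt)).PosDef)
    (hM2 : ∀ i j, i ≠ j → (-(Bred + Matrix.diagonal bshunt)) i j ≤ 0)
    (hI : ∀ i, (Bred.mulVec ELstar) i < Ishunt i) :
    let ELZI := (Bred + Matrix.diagonal bshunt)⁻¹.mulVec (Bred.mulVec ELstar - Ishunt)
    let J := Matrix.diagonal ELZI * (Bred + Matrix.diagonal bshunt)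
    (∀ i, 0 < ELZI i) ∧
    HasFDerivAt
      (fun EL : Fin n → ℝ =>
        (Matrix.diagonal EL).mulVec ((Matrix.diagonal bshunt).mulVec EL) +
        (Matrix.diagonal EL).mulVec Ishunt +
        (Matrix.diagonal EL).mulVec (Bred.mulVec (EL - ELstar)))
      (LinearMap.toContinuousLinearMap (Matrix.mulVecLin J)) ELZI ∧
    ∀ μ ∈ spectrum ℂ (J.map Complex.ofReal), μ.im = 0 ∧ μ.re < 0 := by
  intro ELZI J
  set M := Bred + diagonal bshunt
  have hMunit : IsUnit M.det := by
    simpa using (isUnit_iff_isUnit_det _).mp hM1.isUnit.neg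
  have hequil : M *ᵥ ELZI + (Ishunt - Bred *ᵥ ELstar) = 0 := by
    rw [show ELZI = M⁻¹ *ᵥ (Bred *ᵥ ELstar - Ishunt) from rfl, mulVec_mulVec,
      mul_nonsing_inv _ hMunit, one_mulVec, sub_add_sub_cancel, sub_self]
  have hpos : ∀ i, 0 < ELZI i := hM1.pos_of_mulVec_pos hM2 fun i => by
    simpa [neg_mulVec, eq_neg_of_add_eq_zero_left hequil] using hI i
  refine ⟨hpos, ?_, fun μ hμ => ?_⟩
  · convert hasFDerivAt_mul_mulVec_add_const_of_eq_zero M hequil using 1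
    ext EL i
    simp only [M, mulVec_diagonal, add_mulVec, mulVec_sub, Pi.add_apply, Pi.sub_apply,
      Pi.mul_apply]
    ring
  · exact (Complex.neg_iff.mp (neg_of_mem_spectrum_diagonal_mul hM1 hpos hμ)).symm

/-- Jacobian at the ZI solution is Hurwitz: the Jacobian of
`F(E_L) = [E_L][b_shunt]E_L + [E_L]I_shunt + [E_L]B_red(E_L - E_L*)` at
`E_L^ZI = (B_red + [b_shunt])⁻¹(B_red E_L* - I_shunt)` equals
`[E_L^ZI](B_red + [b_shunt])`, and this matrix is Hurwitz with all eigenvalues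
real and strictly negative. -/
theorem ZI_jacobian_hurwitz {n : ℕ} (hn : 0 < n)
    (Bred : Matrix (Fin n) (Fin n) ℝ) (hsym : Bred.IsSymm)
    (ELstar bshunt Ishunt : Fin n → ℝ)
    (hM1 : (-(Bred + Matrix.diagonal bshunt)).PosDef)
    (hM2 : ∀ i j, i ≠ j → (-(Bred + Matrix.diagonal bshunt)) i j ≤ 0)
    (hI : ∀ i, (Bred.mulVec ELstar) i < Ishunt i) :
    let ELZI := (Bred + Matrix.diagonal bshunt)⁻¹.mulVec (Bred.mulVec ELstar - Ishunt)
    let J := Matrix.diagonal ELZI * (Bred + Matrix.diagonal bshunt)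
    (∀ i, 0 < ELZI i) ∧
    HasFDerivAt
      (fun EL : Fin n → ℝ =>
        (Matrix.diagonal EL).mulVec ((Matrix.diagonal bshunt).mulVec EL) +
        (Matrix.diagonal EL).mulVec Ishunt +
        (Matrix.diagonal EL).mulVec (Bred.mulVec (EL - ELstar)))
      (LinearMap.toContinuousLinearMap (Matrix.mulVecLin J)) ELZI ∧
    ∀ μ ∈ spectrum ℂ (J.map Complex.ofReal), μ.im = 0 ∧ μ.re < 0 :=
  ZI_jacobian_hurwitz_general Bred ELstar bshunt Ishunt hM1 hM2 hI
end

section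
/- (High-voltage solution for ZIP loads) Assume the hypotheses of the ZI-load theorem: −(B_red + [b_shunt]) is positive definite with nonpositive off-diagonal entries and I_shunt > B_red E_L* componentwise, and let E_L^{ZI} := (B_red + [b_shunt])^{−1}(B_red E_L* − I_shunt) ∈ ℝ^n_{>0}. Define the short-circuit capacity matrix Q_sc := [E_L^{ZI}](B_red + [b_shunt])[E_L^{ZI}], which is invertible. Then there exist open neighborhoods U, V ⊆ ℝ^n of the origin, a continuously differentiable map H: U → V with H(0) = 0, and a constant C > 0, such that for every Q_L ∈ ℝ^n with q := Q_sc^{−1}Q_L ∈ U: the vector E_L^{ZIP} := [E_L^{ZI}](1_n − q + H(q)) has strictly positive entries and solves the reduced power flow equation with ZIP loads, 0 = [E_L][b_shunt]E_L + [E_L]I_shunt + Q_L + [E_L]B_red(E_L − E_L*) at E_L = E_L^{ZIP}; it is the unique solution of this equation of the form [E_L^{ZI}](1_n − q + ε) with ε ∈ V; and ‖H(q)‖ ≤ C‖q‖². -/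
/-! With M = B_red + [b_shunt], the matrix -M is a positive definite Z-matrix, hence
inverse-positive, so E_ZI = M⁻¹(B_red E* - I_shunt) is positive and Q_sc = [E_ZI] M [E_ZI] is
invertible. Writing E = [E_ZI](1 - q + ε) and Q_L = Q_sc q turns the ZIP power flow into
Q_sc ε + [ε - q] Q_sc (ε - q) = 0, whose derivative in ε at the origin is Q_sc. The implicit
function theorem gives the branch ε = H q, and because the nonlinearity is quadratic,
‖H q‖ ≤ C ‖q‖² as soon as H q is small. -/

open Matrix Metric Set

namespace Matrix

theorem diagonal_mulVec_eq_mul {ι α : Type*} [Fintype ι] [DecidableEq ι]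
    [NonUnitalNonAssocSemiring α] (d v : ι → α) : diagonal d *ᵥ v = d * v :=
  funext (mulVec_diagonal d v)

variable {ι : Type*} [Fintype ι] {A : Matrix ι ι ℝ}

theorem dotProduct_mulVec_nonpos_of_offDiag_nonpos_s10 (hA : ∀ i j, i ≠ j → A i j ≤ 0)
    {z p : ι → ℝ} (hz : 0 ≤ z) (hp : 0 ≤ p) (hzp : ∀ i, z i * p i = 0) :
    z ⬝ᵥ A *ᵥ p ≤ 0 := by
  simp only [dotProduct, mulVec, Finset.mul_sum]
  refine Finset.sum_nonpos fun i _ => Finset.sum_nonpos fun j _ => ?_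
  rcases eq_or_ne i j with rfl | hij
  · linear_combination A i i * hzp i
  · nlinarith [hA i j hij, mul_nonneg (hz i) (hp j)]

theorem PosDef.nonneg_of_mulVec_nonneg_s10 (hA : A.PosDef) (hZ : ∀ i j, i ≠ j → A i j ≤ 0)
    {x : ι → ℝ} (hx : 0 ≤ A *ᵥ x) : 0 ≤ x := by
  have hparts : ∀ i, x⁻ i * x⁺ i = 0 := fun i => by
    rcases le_total (x i) 0 with h | h <;> simp [h]
  have hAx : 0 ≤ x⁻ ⬝ᵥ A *ᵥ x := dotProduct_nonneg_of_nonneg (negPart_nonneg x) hx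
  have hAp : x⁻ ⬝ᵥ A *ᵥ x⁺ ≤ 0 :=
    dotProduct_mulVec_nonpos_of_offDiag_nonpos_s10 hZ (negPart_nonneg x) (posPart_nonneg x) hparts
  have hsplit : x⁻ ⬝ᵥ A *ᵥ x = x⁻ ⬝ᵥ A *ᵥ x⁺ - x⁻ ⬝ᵥ A *ᵥ x⁻ := by
    rw [← dotProduct_sub, ← mulVec_sub, posPart_sub_negPart]
  have hneg : x⁻ = 0 := by
    by_contra hne
    have := hA.dotProduct_mulVec_pos hne
    simp only [star_trivial] at this
    linarith
  rw [← posPart_sub_negPart x, hneg, sub_zero]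
  exact posPart_nonneg _

theorem PosDef.pos_of_mulVec_pos_s10 (hA : A.PosDef) (hZ : ∀ i j, i ≠ j → A i j ≤ 0)
    {x : ι → ℝ} (hx : ∀ i, 0 < (A *ᵥ x) i) (i : ι) : 0 < x i := by
  classical
  have hx₀ : 0 ≤ x := hA.nonneg_of_mulVec_nonneg_s10 hZ fun i => (hx i).le
  refine (hx₀ i).lt_of_ne fun hxi => (hx i).not_ge ?_
  refine Finset.sum_nonpos fun j _ => ?_
  rcases eq_or_ne i j with rfl | hij
  · simp [← hxi]
  · exact mul_nonpos_of_nonpos_of_nonneg (hZ i j hij) (hx₀ j)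

end Matrix

section QuadraticResidual

variable {A : Type*} [NormedRing A] [NormedAlgebra ℝ A] (L : A ≃L[ℝ] A)

noncomputable def quadraticResidual (p : A × A) : A := L p.2 + (p.2 - p.1) * L (p.2 - p.1)

theorem contDiff_quadraticResidual : ContDiff ℝ 1 (quadraticResidual L) := by
  have hsub : ContDiff ℝ 1 (fun p : A × A => p.2 - p.1) := contDiff_snd.sub contDiff_fst
  exact (L.contDiff.comp contDiff_snd).add (hsub.mul (L.contDiff.comp hsub))

theorem quadraticResidual_zero : quadraticResidual L 0 = 0 := by
  simp [quadraticResidual]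

theorem hasFDerivAt_quadraticResidual_zero :
    HasFDerivAt (quadraticResidual L) ((L : A →L[ℝ] A).comp (.snd ℝ A A)) 0 := by
  have hsub := ((ContinuousLinearMap.snd ℝ A A) - (ContinuousLinearMap.fst ℝ A A)).hasFDerivAt
    (x := (0 : A × A))
  have hquad := hsub.mul' ((L : A →L[ℝ] A).hasFDerivAt.comp (0 : A × A) hsub)
  exact (((L : A →L[ℝ] A).comp (.snd ℝ A A)).hasFDerivAt.add hquad).congr_fderiv (by ext <;> simp)

theorem norm_le_of_quadraticResidual_eq_zero {K : ℝ}
    (hK : ‖(L.symm : A →L[ℝ] A)‖ * ‖(L : A →L[ℝ] A)‖ ≤ K) {q ε : A}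
    (h : quadraticResidual L (q, ε) = 0) (hε : K * ‖ε‖ ≤ 1 / 4) :
    ‖ε‖ ≤ 4 * K * ‖q‖ ^ 2 := by
  have hε_eq : ε = L.symm (-((ε - q) * L (ε - q))) := by
    rw [L.eq_symm_apply, ← add_eq_zero_iff_eq_neg]
    exact h
  have hK₀ : 0 ≤ K := le_trans (by positivity) hK
  have hquad : ‖ε‖ ≤ K * (‖ε‖ + ‖q‖) ^ 2 := calc
    ‖ε‖ ≤ ‖(L.symm : A →L[ℝ] A)‖ * (‖ε - q‖ * (‖(L : A →L[ℝ] A)‖ * ‖ε - q‖)) := by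
        conv_lhs => rw [hε_eq]
        refine (L.symm : A →L[ℝ] A).le_opNorm_of_le ?_
        rw [norm_neg]
        exact (norm_mul_le _ _).trans (by gcongr; exact (L : A →L[ℝ] A).le_opNorm _)
    _ = ‖(L.symm : A →L[ℝ] A)‖ * ‖(L : A →L[ℝ] A)‖ * ‖ε - q‖ ^ 2 := by ring
    _ ≤ K * (‖ε‖ + ‖q‖) ^ 2 :=
        mul_le_mul hK (pow_le_pow_left₀ (norm_nonneg _) (norm_sub_le ε q) 2) (by positivity) hK₀
  nlinarith [mul_le_mul_of_nonneg_left hε (norm_nonneg ε), mul_nonneg hK₀ (sq_nonneg (‖ε‖ - ‖q‖))]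

theorem exists_implicitFunction_quadraticResidual [CompleteSpace A] :
    ∃ H : A → A, H 0 = 0 ∧ ∃ r > 0, ContDiffOn ℝ 1 H (ball 0 r) ∧
      ∀ q ∈ ball (0 : A) r, ∀ ε ∈ ball (0 : A) r, quadraticResidual L (q, ε) = 0 ↔ H q = ε := by
  have cdf : ContDiffAt ℝ 1 (quadraticResidual L) 0 := (contDiff_quadraticResidual L).contDiffAt
  have if₂ : (fderiv ℝ (quadraticResidual L) 0 ∘L .inr ℝ A A).IsInvertible := by
    have hinr : ((L : A →L[ℝ] A).comp (.snd ℝ A A)).comp (.inr ℝ A A) = L := by ext; simp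
    rw [(hasFDerivAt_quadraticResidual_zero L).fderiv, hinr]
    exact ContinuousLinearMap.isInvertible_equiv
  set H := cdf.implicitFunction one_ne_zero if₂
  obtain ⟨r₁, hr₁, hsmooth⟩ := Metric.eventually_nhds_iff_ball.1
    ((cdf.contDiffAt_implicitFunction one_ne_zero if₂).eventually (by simp))
  obtain ⟨r₂, hr₂, hsolve⟩ := Metric.eventually_nhds_iff_ball.1
    (cdf.eventually_apply_eq_iff_implicitFunction one_ne_zero if₂)
  refine ⟨H, cdf.implicitFunction_apply_self one_ne_zero if₂, min r₁ r₂, lt_min hr₁ hr₂,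
    fun q hq => (hsmooth q (ball_subset_ball (min_le_left _ _) hq)).contDiffWithinAt,
    fun q hq ε hε => ?_⟩
  have hqε : (q, ε) ∈ ball ((0 : A), (0 : A)) r₂ := by
    rw [← ball_prod_same]
    exact ⟨ball_subset_ball (min_le_right _ _) hq, ball_subset_ball (min_le_right _ _) hε⟩
  simpa [quadraticResidual_zero] using hsolve (q, ε) hqε

theorem exists_localSolution_quadraticResidual [CompleteSpace A] {ρ : ℝ} (hρ : 0 < ρ) :
    ∃ U V : Set A, IsOpen U ∧ IsOpen V ∧ (0 : A) ∈ U ∧ (0 : A) ∈ V ∧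
      U ⊆ ball 0 ρ ∧ V ⊆ ball 0 ρ ∧
      ∃ H : A → A, ContDiffOn ℝ 1 H U ∧ MapsTo H U V ∧ H 0 = 0 ∧ ∃ C : ℝ, 0 < C ∧ ∀ q ∈ U,
        quadraticResidual L (q, H q) = 0 ∧
        (∀ ε ∈ V, quadraticResidual L (q, ε) = 0 → ε = H q) ∧ ‖H q‖ ≤ C * ‖q‖ ^ 2 := by
  obtain ⟨H, hH₀, r, hr, hH, hsolve⟩ := exists_implicitFunction_quadraticResidual L
  set K := ‖(L.symm : A →L[ℝ] A)‖ * ‖(L : A →L[ℝ] A)‖ + 1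
  have hK : 0 < K := by positivity
  set s := min (min r ρ) (1 / (4 * K))
  have hs : 0 < s := lt_min (lt_min hr hρ) (by positivity)
  have hsr : s ≤ r := (min_le_left _ _).trans (min_le_left _ _)
  have hsρ : s ≤ ρ := (min_le_left _ _).trans (min_le_right _ _)
  have hU : IsOpen (ball 0 s ∩ H ⁻¹' ball 0 s) :=
    (hH.continuousOn.mono (ball_subset_ball hsr)).isOpen_inter_preimage isOpen_ball isOpen_ball
  refine ⟨ball 0 s ∩ H ⁻¹' ball 0 s, ball 0 s, hU, isOpen_ball,
    ⟨mem_ball_self hs, by simpa [hH₀] using hs⟩, mem_ball_self hs,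
    inter_subset_left.trans (ball_subset_ball hsρ), ball_subset_ball hsρ, H,
    hH.mono (inter_subset_left.trans (ball_subset_ball hsr)), fun q hq => hq.2, hH₀,
    4 * K, by positivity, fun q hq => ?_⟩
  have hsol : ∀ ε ∈ ball (0 : A) s, quadraticResidual L (q, ε) = 0 ↔ H q = ε := fun ε hε =>
    hsolve q (ball_subset_ball hsr hq.1) ε (ball_subset_ball hsr hε)
  have hHq : quadraticResidual L (q, H q) = 0 := (hsol _ hq.2).2 rfl
  refine ⟨hHq, fun ε hε h => ((hsol ε hε).1 h).symm,
    norm_le_of_quadraticResidual_eq_zero L (le_add_of_nonneg_right zero_le_one) hHq ?_⟩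
  have hHs : ‖H q‖ < 1 / (4 * K) := (mem_ball_zero_iff.1 hq.2).trans_le (min_le_right _ _)
  rw [lt_div_iff₀ (by positivity)] at hHs
  linarith

end QuadraticResidual

theorem zipPowerFlow_scaled_eq {ι : Type*} [Fintype ι] [DecidableEq ι] {B : Matrix ι ι ℝ}
    {Estar b I e : ι → ℝ} (he : (B + diagonal b) *ᵥ e = B *ᵥ Estar - I) (q ε : ι → ℝ)
    {E : ι → ℝ} (hE : ∀ i, E i = e i * (1 - q i + ε i)) :
    diagonal E *ᵥ (diagonal b *ᵥ E) + diagonal E *ᵥ I +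
        (diagonal e * (B + diagonal b) * diagonal e) *ᵥ q + diagonal E *ᵥ (B *ᵥ (E - Estar)) =
      (diagonal e * (B + diagonal b) * diagonal e) *ᵥ ε +
        (ε - q) * (diagonal e * (B + diagonal b) * diagonal e) *ᵥ (ε - q) := by
  obtain rfl : E = e * (1 - q + ε) := funext hE
  set M := B + diagonal b
  set Q := diagonal e * M * diagonal e
  have hQ : ∀ v, Q *ᵥ v = e * M *ᵥ (e * v) := fun v => by
    simp only [Q, ← mulVec_mulVec, diagonal_mulVec_eq_mul]
  have hE : e * (1 - q + ε) = e + e * (ε - q) := by ring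
  have hload : b * (e * (1 - q + ε)) + I + B *ᵥ (e * (1 - q + ε) - Estar) =
      M *ᵥ (e * (ε - q)) := by
    have hME : M *ᵥ (e * (1 - q + ε)) = B *ᵥ (e * (1 - q + ε)) + b * (e * (1 - q + ε)) := by
      rw [add_mulVec, diagonal_mulVec_eq_mul]
    rw [hE, mulVec_add, he] at hME
    rw [mulVec_sub, hE]
    linear_combination -hME
  calc _ = e * (1 - q + ε) * (b * (e * (1 - q + ε)) + I + B *ᵥ (e * (1 - q + ε) - Estar)) +
        Q *ᵥ q := by simp only [diagonal_mulVec_eq_mul]; ring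
    _ = _ := by
      rw [hload, ← sub_add_cancel ε q, mulVec_add, add_sub_cancel_right, hQ (ε - q)]
      ring

theorem ZIP_high_voltage_solution_general {n : ℕ}
    (Bred : Matrix (Fin n) (Fin n) ℝ)
    (ELstar bshunt Ishunt : Fin n → ℝ)
    (hM1 : (-(Bred + Matrix.diagonal bshunt)).PosDef)
    (hM2 : ∀ i j, i ≠ j → (-(Bred + Matrix.diagonal bshunt)) i j ≤ 0)
    (hI : ∀ i, (Bred.mulVec ELstar) i < Ishunt i) :
    let ELZI := (Bred + Matrix.diagonal bshunt)⁻¹.mulVec (Bred.mulVec ELstar - Ishunt)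
    let Qsc := Matrix.diagonal ELZI * (Bred + Matrix.diagonal bshunt) *
      Matrix.diagonal ELZI
    -- the ZIP reduced power flow equation, as a predicate in the constant-power
    -- vector Q_L and the load voltage vector E
    let zipEq : (Fin n → ℝ) → (Fin n → ℝ) → Prop := fun QL E =>
      (0 : Fin n → ℝ) =
        (Matrix.diagonal E).mulVec ((Matrix.diagonal bshunt).mulVec E) +
        (Matrix.diagonal E).mulVec Ishunt + QL +
        (Matrix.diagonal E).mulVec (Bred.mulVec (E - ELstar))
    IsUnit Qsc.det ∧
    ∃ U V : Set (Fin n → ℝ), IsOpen U ∧ IsOpen V ∧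
      (0 : Fin n → ℝ) ∈ U ∧ (0 : Fin n → ℝ) ∈ V ∧
      ∃ H : (Fin n → ℝ) → (Fin n → ℝ), ContDiffOn ℝ 1 H U ∧ Set.MapsTo H U V ∧
        H 0 = 0 ∧
        ∃ C : ℝ, 0 < C ∧
          ∀ QL : Fin n → ℝ, Qsc⁻¹.mulVec QL ∈ U →
            (∀ i, 0 < ELZI i * (1 - Qsc⁻¹.mulVec QL i + H (Qsc⁻¹.mulVec QL) i)) ∧
            zipEq QL (fun i =>
              ELZI i * (1 - Qsc⁻¹.mulVec QL i + H (Qsc⁻¹.mulVec QL) i)) ∧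
            (∀ ε ∈ V, zipEq QL (fun i => ELZI i * (1 - Qsc⁻¹.mulVec QL i + ε i)) →
              ε = H (Qsc⁻¹.mulVec QL)) ∧
            ‖H (Qsc⁻¹.mulVec QL)‖ ≤ C * ‖Qsc⁻¹.mulVec QL‖ ^ 2 := by
  intro ELZI Qsc zipEq
  set M := Bred + diagonal bshunt
  have hM : IsUnit M.det := M.isUnit_iff_isUnit_det.1 (by simpa using hM1.isUnit)
  have hMe : M *ᵥ ELZI = Bred *ᵥ ELstar - Ishunt := by
    rw [mulVec_mulVec, mul_nonsing_inv M hM, one_mulVec]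
  have hELZI : ∀ i, 0 < ELZI i := hM1.pos_of_mulVec_pos_s10 hM2 fun i => by
    simp [neg_mulVec, hMe, hI i]
  have hQ : IsUnit Qsc.det := by
    have hprod : 0 < ∏ i, ELZI i := Finset.prod_pos fun i _ => hELZI i
    simpa [Qsc, det_mul, hprod.ne'] using hM
  let L := (Qsc.toLinearEquiv' (Qsc.invertibleOfIsUnitDet hQ)).toContinuousLinearEquiv
  obtain ⟨U, V, hU, hV, hU₀, hV₀, hUρ, hVρ, H, hH, hUV, hH₀, C, hC, hsol⟩ :=
    exists_localSolution_quadraticResidual L one_half_pos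
  refine ⟨hQ, U, V, hU, hV, hU₀, hV₀, H, hH, hUV, hH₀, C, hC, fun QL hq => ?_⟩
  set q := Qsc⁻¹ *ᵥ QL
  have hQL : QL = Qsc *ᵥ q := by rw [mulVec_mulVec, mul_nonsing_inv Qsc hQ, one_mulVec]
  have hzip : ∀ ε, zipEq QL (fun i => ELZI i * (1 - q i + ε i)) ↔
      quadraticResidual L (q, ε) = 0 := fun ε => by
    rw [hQL]
    show (0 = _) ↔ _
    rw [zipPowerFlow_scaled_eq hMe q ε fun i => rfl, eq_comm]
    exact Iff.rfl
  obtain ⟨hHq, huniq, hbound⟩ := hsol q hq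
  refine ⟨fun i => mul_pos (hELZI i) ?_, (hzip _).2 hHq, fun ε hε h => huniq ε hε ((hzip ε).1 h),
    hbound⟩
  have hqi := (norm_le_pi_norm q i).trans_lt (mem_ball_zero_iff.1 (hUρ hq))
  have hHi := (norm_le_pi_norm (H q) i).trans_lt (mem_ball_zero_iff.1 (hVρ (hUV hq)))
  rw [Real.norm_eq_abs, abs_lt] at hqi hHi
  linarith [hqi.2, hHi.1]

/-- High-voltage solution for ZIP loads. -/
theorem ZIP_high_voltage_solution {n : ℕ} (hn : 0 < n)
    (Bred : Matrix (Fin n) (Fin n) ℝ) (hsym : Bred.IsSymm)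
    (ELstar bshunt Ishunt : Fin n → ℝ)
    (hM1 : (-(Bred + Matrix.diagonal bshunt)).PosDef)
    (hM2 : ∀ i j, i ≠ j → (-(Bred + Matrix.diagonal bshunt)) i j ≤ 0)
    (hI : ∀ i, (Bred.mulVec ELstar) i < Ishunt i) :
    let ELZI := (Bred + Matrix.diagonal bshunt)⁻¹.mulVec (Bred.mulVec ELstar - Ishunt)
    let Qsc := Matrix.diagonal ELZI * (Bred + Matrix.diagonal bshunt) *
      Matrix.diagonal ELZI
    -- the ZIP reduced power flow equation, as a predicate in the constant-power
    -- vector Q_L and the load voltage vector E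
    let zipEq : (Fin n → ℝ) → (Fin n → ℝ) → Prop := fun QL E =>
      (0 : Fin n → ℝ) =
        (Matrix.diagonal E).mulVec ((Matrix.diagonal bshunt).mulVec E) +
        (Matrix.diagonal E).mulVec Ishunt + QL +
        (Matrix.diagonal E).mulVec (Bred.mulVec (E - ELstar))
    IsUnit Qsc.det ∧
    ∃ U V : Set (Fin n → ℝ), IsOpen U ∧ IsOpen V ∧
      (0 : Fin n → ℝ) ∈ U ∧ (0 : Fin n → ℝ) ∈ V ∧
      ∃ H : (Fin n → ℝ) → (Fin n → ℝ), ContDiffOn ℝ 1 H U ∧ Set.MapsTo H U V ∧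
        H 0 = 0 ∧
        ∃ C : ℝ, 0 < C ∧
          ∀ QL : Fin n → ℝ, Qsc⁻¹.mulVec QL ∈ U →
            (∀ i, 0 < ELZI i * (1 - Qsc⁻¹.mulVec QL i + H (Qsc⁻¹.mulVec QL) i)) ∧
            zipEq QL (fun i =>
              ELZI i * (1 - Qsc⁻¹.mulVec QL i + H (Qsc⁻¹.mulVec QL) i)) ∧
            (∀ ε ∈ V, zipEq QL (fun i => ELZI i * (1 - Qsc⁻¹.mulVec QL i + ε i)) →
              ε = H (Qsc⁻¹.mulVec QL)) ∧
            ‖H (Qsc⁻¹.mulVec QL)‖ ≤ C * ‖Qsc⁻¹.mulVec QL‖ ^ 2 :=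
  ZIP_high_voltage_solution_general Bred ELstar bshunt Ishunt hM1 hM2 hI
end

section
/- (Quadratic bound from a self-referential quadratic inequality) Let c > 0 and let q, x ≥ 0 be real numbers with 4cq < 1. If x ≤ c(q + x)² and x ≤ (1 − 2cq)/(2c), then x ≤ 4cq². -/
/-- Quadratic bound from a self-referential quadratic inequality:
if `c > 0`, `q, x ≥ 0`, `4cq < 1`, `x ≤ c(q + x)²` and `x ≤ (1 - 2cq)/(2c)`,
then `x ≤ 4cq²`. -/
theorem quadratic_self_bound (c q x : ℝ) (hc : 0 < c) (hq : 0 ≤ q) (hx : 0 ≤ x)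
    (hsmall : 4 * c * q < 1) (h1 : x ≤ c * (q + x) ^ 2)
    (h2 : x ≤ (1 - 2 * c * q) / (2 * c)) :
    x ≤ 4 * c * q ^ 2 := by
  by_contra h
  push_neg at h
  have hB : 0 ≤ 1 - 2 * c * q - 2 * c * x := by
    have := (le_div_iff₀ (by positivity : (0:ℝ) < 2 * c)).mp h2
    nlinarith
  have hA : 0 < x - 4 * c * q ^ 2 := by linarith
  nlinarith [mul_pos hA (by nlinarith : (0:ℝ) < 1 - 4 * c * q),
    mul_nonneg hA.le hB, mul_nonneg (mul_nonneg hB hc.le) (sq_nonneg q),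
    mul_pos hc hA, mul_nonneg (mul_nonneg hB hq) hc.le,
    mul_nonneg (mul_nonneg hA.le hc.le) hq, sq_nonneg q, mul_pos hc hc]
end

section
/- (Equilibria with dynamic shunt loads) Consider load susceptances b ∈ ℝ^n governed by the dynamic shunt model, whose equilibria satisfy 0 = Q_L − [E_L]²b for a fixed demand vector Q_L ∈ ℝ^n with strictly negative entries, coupled with the reduced power flow equation 0 = [E_L]²b + [E_L]B_red(E_L − E_L*). Then: (1) a pair (E_L, b) ∈ ℝ^n_{>0} × ℝ^n satisfies both equations if and only if E_L solves the constant-power reduced power flow equation 0 = Q_L + [E_L]B_red(E_L − E_L*) and b = [E_L]^{−2}Q_L (which then has strictly negative entries); (2) with Q_sc := [E_L*]B_red[E_L*], which is invertible, there exist a neighborhood U of 0, a C¹ map H with H(0) = 0, and C > 0 such that for all Q_L < 0 with Q_sc^{−1}Q_L ∈ U there is a unique such pair of the form E_L^{DS} = [E_L*](1_n − Q_sc^{−1}Q_L + ε) with ε = H(Q_sc^{−1}Q_L), ‖ε‖ ≤ C‖Q_sc^{−1}Q_L‖², and b^{DS} = [E_L^{DS}]^{−2}Q_L. -/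
/-!
Part (1) is solving the shunt equation `Q_L = [E_L]² b` for `b` and substituting. For part (2) write
`Q_L = Q_sc x` and `E_L = [E_L*](1 - y)` with `y = x - ε`: the power flow equation becomes
`(1 - y) ⊙ A y = A x` for the invertible matrix `A = B_red [E_L*]`, i.e. `x = f y` with
`f y = A⁻¹ ((1 - y) ⊙ A y)`. Since `‖f y - y‖ ≤ ‖A⁻¹‖ ‖A‖ ‖y‖²`, `f` is a C¹ map tangent to the
identity at `0`, so the inverse function theorem gives a C¹ local inverse `g`, and `H x = x - g x`
is quadratically small because `x - g x = f (g x) - g x` and `‖g x‖ ≤ 2 ‖x‖`.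
-/

open Matrix Filter Topology Metric

theorem hasFDerivAt_id_of_norm_sub_le_sq {E : Type*} [NormedAddCommGroup E] [NormedSpace ℝ E]
    {f : E → E} {c : ℝ}
    (hc : ∀ y, ‖f y - y‖ ≤ c * ‖y‖ ^ 2) :
    HasFDerivAt f (ContinuousLinearMap.id ℝ E) 0 := by
  have hf0 : f 0 = 0 := by simpa using hc 0
  rw [hasFDerivAt_iff_isLittleO_nhds_zero]
  refine (Asymptotics.IsBigO.of_bound c (Eventually.of_forall fun y => ?_)).trans_isLittleO
    (Asymptotics.isLittleO_norm_pow_id one_lt_two)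
  simpa [hf0] using hc y

theorem norm_sub_le_four_mul_sq {E : Type*} [SeminormedAddCommGroup E] {x y : E} {c : ℝ}
    (hc : 0 ≤ c) (hxy : ‖x - y‖ ≤ c * ‖y‖ ^ 2) (hy : c * ‖y‖ ≤ 1 / 2) :
    ‖x - y‖ ≤ 4 * c * ‖x‖ ^ 2 := by
  have hyx : ‖y‖ ≤ 2 * ‖x‖ := by
    have := norm_le_norm_add_norm_sub' y x
    rw [norm_sub_rev] at this
    nlinarith [norm_nonneg y]
  calc ‖x - y‖ ≤ c * ‖y‖ ^ 2 := hxy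
    _ ≤ c * (2 * ‖x‖) ^ 2 := by gcongr
    _ = 4 * c * ‖x‖ ^ 2 := by ring

theorem exists_localInverse_of_norm_sub_le_sq {E : Type*} [NormedAddCommGroup E]
    [NormedSpace ℝ E] [CompleteSpace E]
    {f : E → E} (hf : ContDiffAt ℝ 1 f 0) {c : ℝ} (hc0 : 0 ≤ c)
    (hc : ∀ y, ‖f y - y‖ ≤ c * ‖y‖ ^ 2) {ρ : ℝ} (hρ : 0 < ρ) :
    ∃ r > 0, ∃ U : Set E, IsOpen U ∧ 0 ∈ U ∧ U ⊆ ball 0 r ∧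
      ∃ g : E → E, ContDiffOn ℝ 1 g U ∧ g 0 = 0 ∧
        ∀ x ∈ U, ‖g x‖ < ρ ∧ f (g x) = x ∧ ‖x - g x‖ ≤ 4 * c * ‖x‖ ^ 2 ∧
          ∀ y ∈ ball 0 (2 * r), f y = x → y = g x := by
  have hf0 : f 0 = 0 := by simpa using hc 0
  have hf' : HasFDerivAt f (ContinuousLinearEquiv.refl ℝ E : E →L[ℝ] E) 0 :=
    hasFDerivAt_id_of_norm_sub_le_sq hc
  have hs := hf.hasStrictFDerivAt' hf' one_ne_zero
  set g := hs.localInverse f _ 0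
  have hg0 : g 0 = 0 := by simpa [hf0] using hs.localInverse_apply_image
  obtain ⟨r', hr', hleft⟩ := Metric.eventually_nhds_iff_ball.1 hs.eventually_left_inverse
  have hg : Tendsto g (𝓝 0) (𝓝 0) := by simpa [hf0, hg0] using hs.localInverse_tendsto
  have hP : ∀ᶠ x in 𝓝 (0 : E), ContDiffAt ℝ 1 g x ∧ ‖x‖ < r' / 2 ∧ f (g x) = x ∧
      ‖g x‖ < ρ ∧ c * ‖g x‖ < 1 / 2 := by
    refine ((hf0 ▸ hf.to_localInverse hf' one_ne_zero).eventually (by simp)).and ?_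
    have hgn : Tendsto (fun x => ‖g x‖) (𝓝 0) (𝓝 0) := tendsto_norm_zero.comp hg
    exact (tendsto_norm_zero.eventually (gt_mem_nhds (half_pos hr'))).and <|
      (hf0 ▸ hs.eventually_right_inverse : ∀ᶠ x in 𝓝 0, f (g x) = x).and <|
      (hgn.eventually (gt_mem_nhds hρ)).and <|
      (hgn.const_mul c).eventually (gt_mem_nhds (by simp))
  obtain ⟨U, hPU, hU, hU0⟩ := _root_.eventually_nhds_iff.1 hP
  refine ⟨r' / 2, by positivity, U, hU, hU0, fun x hx => mem_ball_zero_iff.2 (hPU x hx).2.1,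
    g, fun x hx => (hPU x hx).1.contDiffWithinAt, hg0, fun x hx => ?_⟩
  obtain ⟨-, -, hfg, hgρ, hgc⟩ := hPU x hx
  refine ⟨hgρ, hfg, norm_sub_le_four_mul_sq hc0 (by simpa only [hfg] using hc (g x)) hgc.le,
    fun y hy hyx => ?_⟩
  rw [← hyx]
  exact (hleft y (by rwa [mul_div_cancel₀ _ two_ne_zero] at hy)).symm

section

variable {R : Type*} [NormedRing R] [NormedAlgebra ℝ R]

theorem ContinuousLinearEquiv.contDiff_symm_one_sub_mul_apply (A : R ≃L[ℝ] R) :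
    ContDiff ℝ 1 fun y => A.symm ((1 - y) * A y) :=
  A.symm.contDiff.comp ((contDiff_const.sub contDiff_id).mul A.contDiff)

theorem ContinuousLinearEquiv.norm_symm_one_sub_mul_apply_sub_le (A : R ≃L[ℝ] R) (y : R) :
    ‖A.symm ((1 - y) * A y) - y‖ ≤
      ‖(A.symm : R →L[ℝ] R)‖ * ‖(A : R →L[ℝ] R)‖ * ‖y‖ ^ 2 := by
  have : A.symm ((1 - y) * A y) - y = -A.symm (y * A y) := by
    rw [sub_mul, one_mul, map_sub, A.symm_apply_apply]; abel
  rw [this, norm_neg]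
  calc ‖A.symm (y * A y)‖ ≤ ‖(A.symm : R →L[ℝ] R)‖ * ‖y * A y‖ :=
        (A.symm : R →L[ℝ] R).le_opNorm _
    _ ≤ ‖(A.symm : R →L[ℝ] R)‖ * (‖y‖ * (‖(A : R →L[ℝ] R)‖ * ‖y‖)) := by
        gcongr
        exact (norm_mul_le _ _).trans (by gcongr; exact (A : R →L[ℝ] R).le_opNorm y)
    _ = _ := by ring

theorem ContinuousLinearEquiv.exists_local_solution_one_sub_mul_apply_eq [CompleteSpace R]
    (A : R ≃L[ℝ] R) {ρ : ℝ} (hρ : 0 < ρ) :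
    ∃ r > 0, ∃ U : Set R, IsOpen U ∧ 0 ∈ U ∧ U ⊆ ball 0 r ∧
      ∃ g : R → R, ContDiffOn ℝ 1 g U ∧ g 0 = 0 ∧ ∃ C > 0,
        ∀ x ∈ U, ‖g x‖ < ρ ∧ (1 - g x) * A (g x) = A x ∧ ‖x - g x‖ ≤ C * ‖x‖ ^ 2 ∧
          ∀ y ∈ ball 0 (2 * r), (1 - y) * A y = A x → y = g x := by
  set c := ‖(A.symm : R →L[ℝ] R)‖ * ‖(A : R →L[ℝ] R)‖
  have hc : 0 ≤ c := by positivity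
  obtain ⟨r, hr, U, hU, hU0, hUr, g, hgU, hg0, hsol⟩ := exists_localInverse_of_norm_sub_le_sq
    A.contDiff_symm_one_sub_mul_apply.contDiffAt hc A.norm_symm_one_sub_mul_apply_sub_le hρ
  refine ⟨r, hr, U, hU, hU0, hUr, g, hgU, hg0, 4 * c + 1, by positivity, fun x hx => ?_⟩
  obtain ⟨hgρ, hfg, hquad, huniq⟩ := hsol x hx
  refine ⟨hgρ, A.symm_apply_eq.1 hfg, hquad.trans (by gcongr; linarith),
    fun y hy hxy => huniq y hy (A.symm_apply_eq.2 hxy)⟩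

end

theorem Matrix.isUnit_diagonal_of_ne_zero {ι K : Type*} [Fintype ι] [DecidableEq ι] [Field K]
    {d : ι → K} (hd : ∀ i, d i ≠ 0) : IsUnit (diagonal d) :=
  isUnit_diagonal.2 (Pi.isUnit_iff.2 fun i => (hd i).isUnit)

theorem Matrix.exists_continuousLinearEquiv_mulVec {ι : Type*} [Fintype ι] [DecidableEq ι]
    {M : Matrix ι ι ℝ} (hM : IsUnit M) :
    ∃ A : (ι → ℝ) ≃L[ℝ] (ι → ℝ), ⇑A = (M *ᵥ ·) :=
  ⟨(M.toLinearEquiv' hM.invertible).toContinuousLinearEquiv, rfl⟩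

section PowerFlow

variable {ι : Type*} [Fintype ι] [DecidableEq ι]

theorem power_flow_residual_eq (d x ε : ι → ℝ) (B : Matrix ι ι ℝ) :
    (diagonal d * B * diagonal d) *ᵥ x +
        diagonal (fun i => d i * (1 - x i + ε i)) *ᵥ
          (B *ᵥ ((fun i => d i * (1 - x i + ε i)) - d)) =
      d * ((B * diagonal d) *ᵥ x - (1 - (x - ε)) * (B * diagonal d) *ᵥ (x - ε)) := by
  have hE : (fun i => d i * (1 - x i + ε i)) - d = -(diagonal d *ᵥ (x - ε)) := by
    ext i; simp only [Pi.sub_apply, Pi.neg_apply, mulVec_diagonal]; ring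
  ext i
  simp only [hE, mulVec_neg, ← mulVec_mulVec, mulVec_diagonal, Matrix.mul_assoc, Pi.add_apply,
    Pi.mul_apply, Pi.sub_apply, Pi.one_apply, Pi.neg_apply]
  ring

theorem power_flow_eq_zero_iff {d : ι → ℝ} (hd : ∀ i, 0 < d i) (x ε : ι → ℝ)
    (B : Matrix ι ι ℝ) :
    (0 = (diagonal d * B * diagonal d) *ᵥ x +
        diagonal (fun i => d i * (1 - x i + ε i)) *ᵥ
          (B *ᵥ ((fun i => d i * (1 - x i + ε i)) - d))) ↔
      (1 - (x - ε)) * (B * diagonal d) *ᵥ (x - ε) = (B * diagonal d) *ᵥ x := by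
  rw [power_flow_residual_eq]
  simp only [funext_iff, Pi.zero_apply, Pi.mul_apply, Pi.sub_apply, zero_eq_mul, (hd _).ne',
    false_or, sub_eq_zero, @eq_comm _ (((B * diagonal d) *ᵥ x) _)]

end PowerFlow

theorem shunt_equilibrium_iff {ι : Type*} {Q E b v : ι → ℝ} (hQ : ∀ i, Q i < 0)
    (hE : ∀ i, 0 < E i) :
    ((0 = Q - fun i => E i ^ 2 * b i) ∧ 0 = (fun i => E i ^ 2 * b i) + v) ↔
      0 = Q + v ∧ (b = fun i => Q i / E i ^ 2) ∧ ∀ i, b i < 0 := by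
  have hb : (Q = fun i => E i ^ 2 * b i) ↔ b = fun i => Q i / E i ^ 2 := by
    simp only [funext_iff, eq_div_iff (pow_pos (hE _) 2).ne', mul_comm (b _), eq_comm]
  rw [eq_comm, sub_eq_zero]
  constructor
  · rintro ⟨hQb, hv⟩
    refine ⟨hQb ▸ hv, hb.1 hQb, fun i => ?_⟩
    rw [hb.1 hQb]
    exact div_neg_of_neg_of_pos (hQ i) (pow_pos (hE i) 2)
  · rintro ⟨hv, hQb, -⟩
    have hQb' := hb.2 hQb
    exact ⟨hQb', hQb' ▸ hv⟩

theorem dynamic_shunt_equilibria_general {n : ℕ}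
    (Bred : Matrix (Fin n) (Fin n) ℝ)
    (hnd : (-Bred).PosDef)
    (ELstar : Fin n → ℝ) (hELstar : ∀ i, 0 < ELstar i) :
    -- (1) correspondence between dynamic-shunt equilibria and the constant-power
    -- reduced power flow equation
    (∀ QL : Fin n → ℝ, (∀ i, QL i < 0) →
      ∀ (EL b : Fin n → ℝ), (∀ i, 0 < EL i) →
        ((((0 : Fin n → ℝ) = QL - fun i => (EL i) ^ 2 * b i) ∧
          ((0 : Fin n → ℝ) = (fun i => (EL i) ^ 2 * b i) +
            (Matrix.diagonal EL).mulVec (Bred.mulVec (EL - ELstar))))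
        ↔
        (((0 : Fin n → ℝ) = QL +
            (Matrix.diagonal EL).mulVec (Bred.mulVec (EL - ELstar))) ∧
          (b = fun i => QL i / (EL i) ^ 2) ∧ (∀ i, b i < 0)))) ∧
    -- (2) perturbative existence and uniqueness of the equilibrium
    (let Qsc := Matrix.diagonal ELstar * Bred * Matrix.diagonal ELstar
     IsUnit Qsc.det ∧
     ∃ U : Set (Fin n → ℝ), IsOpen U ∧ (0 : Fin n → ℝ) ∈ U ∧
       ∃ H : (Fin n → ℝ) → (Fin n → ℝ), ContDiffOn ℝ 1 H U ∧ H 0 = 0 ∧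
         ∃ C : ℝ, 0 < C ∧
           ∀ QL : Fin n → ℝ, (∀ i, QL i < 0) → Qsc⁻¹.mulVec QL ∈ U →
             (∀ i, 0 < ELstar i *
               (1 - Qsc⁻¹.mulVec QL i + H (Qsc⁻¹.mulVec QL) i)) ∧
             ((0 : Fin n → ℝ) = QL +
               (Matrix.diagonal (fun i => ELstar i *
                 (1 - Qsc⁻¹.mulVec QL i + H (Qsc⁻¹.mulVec QL) i))).mulVec
                 (Bred.mulVec ((fun i => ELstar i *
                   (1 - Qsc⁻¹.mulVec QL i + H (Qsc⁻¹.mulVec QL) i)) - ELstar))) ∧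
             ‖H (Qsc⁻¹.mulVec QL)‖ ≤ C * ‖Qsc⁻¹.mulVec QL‖ ^ 2 ∧
             (∀ ε, ε ∈ U →
               (∀ i, 0 < ELstar i * (1 - Qsc⁻¹.mulVec QL i + ε i)) →
               ((0 : Fin n → ℝ) = QL +
                 (Matrix.diagonal (fun i => ELstar i *
                   (1 - Qsc⁻¹.mulVec QL i + ε i))).mulVec
                   (Bred.mulVec ((fun i => ELstar i *
                     (1 - Qsc⁻¹.mulVec QL i + ε i)) - ELstar))) →
               ε = H (Qsc⁻¹.mulVec QL))) := by
  refine ⟨fun QL hQL EL b hEL => shunt_equilibrium_iff hQL hEL, ?_⟩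
  intro Qsc
  have hB : IsUnit Bred := by simpa using hnd.isUnit.neg
  have hD : IsUnit (diagonal ELstar) := isUnit_diagonal_of_ne_zero fun i => (hELstar i).ne'
  have hQsc : IsUnit Qsc.det := (isUnit_iff_isUnit_det _).1 ((hD.mul hB).mul hD)
  obtain ⟨A, hA⟩ := exists_continuousLinearEquiv_mulVec (hB.mul hD)
  obtain ⟨r, -, U, hU, hU0, hUr, g, hg, hg0, C, hC, hsol⟩ :=
    A.exists_local_solution_one_sub_mul_apply_eq one_pos
  refine ⟨hQsc, U, hU, hU0, fun x => x - g x, contDiffOn_id.sub hg, by simp [hg0], C, hC,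
    fun QL _ hxU => ?_⟩
  set x := Qsc⁻¹ *ᵥ QL
  have hQL : QL = Qsc *ᵥ x := by simp only [x, mulVec_mulVec, mul_nonsing_inv _ hQsc, one_mulVec]
  obtain ⟨hgx, hsolx, hquad, huniq⟩ := hsol x hxU
  simp only [hA] at hsolx huniq
  dsimp only
  refine ⟨fun i => mul_pos (hELstar i) ?_, ?_, hquad, fun ε hε _ hεeq => ?_⟩
  · rw [Pi.sub_apply, sub_add_sub_cancel, sub_pos]
    exact (Real.le_norm_self _).trans_lt ((norm_le_pi_norm (g x) i).trans_lt hgx)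
  · rw [hQL, power_flow_eq_zero_iff hELstar, sub_sub_cancel]
    exact hsolx
  · rw [hQL, power_flow_eq_zero_iff hELstar] at hεeq
    have hxε : x - ε ∈ ball 0 (2 * r) := by
      rw [mem_ball_zero_iff, two_mul]
      exact (norm_sub_le x ε).trans_lt
        (add_lt_add (mem_ball_zero_iff.1 (hUr hxU)) (mem_ball_zero_iff.1 (hUr hε)))
    rw [← huniq _ hxε hεeq, sub_sub_cancel]

/-- Equilibria with dynamic shunt loads. -/
theorem dynamic_shunt_equilibria {n : ℕ} (hn : 0 < n)
    (Bred : Matrix (Fin n) (Fin n) ℝ) (hsym : Bred.IsSymm)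
    (hnd : (-Bred).PosDef) (hoff : ∀ i j, i ≠ j → 0 ≤ Bred i j)
    (ELstar : Fin n → ℝ) (hELstar : ∀ i, 0 < ELstar i) :
    -- (1) correspondence between dynamic-shunt equilibria and the constant-power
    -- reduced power flow equation
    (∀ QL : Fin n → ℝ, (∀ i, QL i < 0) →
      ∀ (EL b : Fin n → ℝ), (∀ i, 0 < EL i) →
        ((((0 : Fin n → ℝ) = QL - fun i => (EL i) ^ 2 * b i) ∧
          ((0 : Fin n → ℝ) = (fun i => (EL i) ^ 2 * b i) +
            (Matrix.diagonal EL).mulVec (Bred.mulVec (EL - ELstar))))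
        ↔
        (((0 : Fin n → ℝ) = QL +
            (Matrix.diagonal EL).mulVec (Bred.mulVec (EL - ELstar))) ∧
          (b = fun i => QL i / (EL i) ^ 2) ∧ (∀ i, b i < 0)))) ∧
    -- (2) perturbative existence and uniqueness of the equilibrium
    (let Qsc := Matrix.diagonal ELstar * Bred * Matrix.diagonal ELstar
     IsUnit Qsc.det ∧
     ∃ U : Set (Fin n → ℝ), IsOpen U ∧ (0 : Fin n → ℝ) ∈ U ∧
       ∃ H : (Fin n → ℝ) → (Fin n → ℝ), ContDiffOn ℝ 1 H U ∧ H 0 = 0 ∧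
         ∃ C : ℝ, 0 < C ∧
           ∀ QL : Fin n → ℝ, (∀ i, QL i < 0) → Qsc⁻¹.mulVec QL ∈ U →
             (∀ i, 0 < ELstar i *
               (1 - Qsc⁻¹.mulVec QL i + H (Qsc⁻¹.mulVec QL) i)) ∧
             ((0 : Fin n → ℝ) = QL +
               (Matrix.diagonal (fun i => ELstar i *
                 (1 - Qsc⁻¹.mulVec QL i + H (Qsc⁻¹.mulVec QL) i))).mulVec
                 (Bred.mulVec ((fun i => ELstar i *
                   (1 - Qsc⁻¹.mulVec QL i + H (Qsc⁻¹.mulVec QL) i)) - ELstar))) ∧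
             ‖H (Qsc⁻¹.mulVec QL)‖ ≤ C * ‖Qsc⁻¹.mulVec QL‖ ^ 2 ∧
             (∀ ε, ε ∈ U →
               (∀ i, 0 < ELstar i * (1 - Qsc⁻¹.mulVec QL i + ε i)) →
               ((0 : Fin n → ℝ) = QL +
                 (Matrix.diagonal (fun i => ELstar i *
                   (1 - Qsc⁻¹.mulVec QL i + ε i))).mulVec
                   (Bred.mulVec ((fun i => ELstar i *
                     (1 - Qsc⁻¹.mulVec QL i + ε i)) - ELstar))) →
               ε = H (Qsc⁻¹.mulVec QL))) :=
  dynamic_shunt_equilibria_general Bred hnd ELstar hELstar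
end
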